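/- arXiv:1606.06033 — 4 statements merged into one kernel-verified Lean document; each statement's English description precedes it below -/
import Mathlib

section
/- Almost sure convergence of the recursive Parzen–Rosenblatt density estimator: under assumptions (A1)–(A3), for any x ∈ ℝ, ĝ_n(x) = (1/n)∑_{k=1}^n (1/h_k)K((x−X_k)/h_k) converges almost surely to g(x) as n → ∞. -/
open MeasureTheory ProbabilityTheory Filter Real Finset
open scoped ENNReal NNReal Topology

/-!
The summands `Z_k = h_k⁻¹ K ((x - X_k) / h_k)` are independent and nonnegative. Since `K` is a
probability density, `E Z_k = ∫ K(u) g(x - h_k u) du → g(x)`, while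
`Var Z_k ≤ E Z_k² ≤ sup K · sup g / h_k` grows like `k^α`. So `Var (∑_{k ≤ N} Z_k) = O(N^{1+α})`,
and because `α < 1` Chebyshev's inequality and Borel–Cantelli give the law of large numbers along
every geometric sequence `⌊cⁿ⌋`, `c > 1`. The partial sums are monotone, which interpolates
between `⌊cⁿ⌋` and `⌊cⁿ⁺¹⌋` as `c ↓ 1` (Etemadi's argument).
-/

lemma integrable_of_abs_le_of_integrable_pow_mul {f : ℝ → ℝ}
    (hf : AEStronglyMeasurable f) {C : ℝ} (hC : ∀ t, |f t| ≤ C) {n : ℕ}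
    (hn : Integrable (fun t => t ^ n * f t)) : Integrable f := by
  have hdom : Integrable fun t => (Set.Icc (-1 : ℝ) 1).indicator (fun _ => C) t + |t ^ n * f t| :=
    ((integrableOn_const measure_Icc_lt_top.ne enorm_ne_top).integrable_indicator
      measurableSet_Icc).add hn.abs
  refine hdom.mono' hf (Eventually.of_forall fun t => ?_)
  rw [Real.norm_eq_abs]
  by_cases ht : t ∈ Set.Icc (-1 : ℝ) 1
  · rw [Set.indicator_of_mem ht]
    linarith [hC t, abs_nonneg (t ^ n * f t)]
  · have h1 : 1 ≤ |t| := by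
      rw [Set.mem_Icc, not_and_or, not_le, not_le] at ht
      rcases ht with ht | ht
      · rw [abs_of_neg (by linarith)]; linarith
      · rw [abs_of_pos (by linarith)]; linarith
    have hpow : 1 ≤ |t| ^ n := one_le_pow₀ h1
    rw [Set.indicator_of_notMem ht, zero_add, abs_mul, abs_pow]
    nlinarith [abs_nonneg (f t)]

noncomputable def parzenKernel (K : ℝ → ℝ) (b x t : ℝ) : ℝ := 1 / b * K ((x - t) / b)

lemma measurable_parzenKernel {K : ℝ → ℝ} (hK : Measurable K) (b x : ℝ) :
    Measurable (parzenKernel K b x) := by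
  unfold parzenKernel; fun_prop

lemma parzenKernel_nonneg {K : ℝ → ℝ} (hK : ∀ t, 0 ≤ K t) {b : ℝ} (hb : 0 ≤ b) (x t : ℝ) :
    0 ≤ parzenKernel K b x t :=
  mul_nonneg (by positivity) (hK _)

lemma parzenKernel_le {K : ℝ → ℝ} {C : ℝ} (hK : ∀ t, K t ≤ C) {b : ℝ} (hb : 0 ≤ b) (x t : ℝ) :
    parzenKernel K b x t ≤ C / b := by
  rw [div_eq_inv_mul, ← one_div]
  exact mul_le_mul_of_nonneg_left (hK _) (by positivity)

lemma integral_mul_parzenKernel (K g : ℝ → ℝ) {b : ℝ} (hb : 0 < b) (x : ℝ) :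
    ∫ t, g t * parzenKernel K b x t = ∫ u, K u * g (x - b * u) := by
  set G : ℝ → ℝ := fun u => K u * g (x - b * u)
  have hG : ∀ t, g t * parzenKernel K b x t = b⁻¹ * (fun s => G (s / b)) (x - t) := by
    intro t
    have : x - b * ((x - t) / b) = t := by field_simp; ring
    simp only [parzenKernel, G, this]
    ring
  simp_rw [hG]
  rw [integral_const_mul, integral_sub_left_eq_self (fun s => G (s / b)), Measure.integral_comp_div,
    abs_of_pos hb, smul_eq_mul, inv_mul_cancel_left₀ hb.ne']

lemma tendsto_integral_mul_comp_sub_mul {K g : ℝ → ℝ} (hK : Integrable K)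
    (hKint : ∫ t, K t = 1) (hg : Measurable g) {x : ℝ} (hgx : ContinuousAt g x) {C : ℝ}
    (hC : ∀ t, |g t| ≤ C) {b : ℕ → ℝ} (hb : Tendsto b atTop (𝓝 0)) :
    Tendsto (fun k => ∫ u, K u * g (x - b k * u)) atTop (𝓝 (g x)) := by
  have hlim : ∫ u, K u * g x = g x := by rw [integral_mul_const, hKint, one_mul]
  rw [← hlim]
  refine tendsto_integral_of_dominated_convergence (fun u => C * ‖K u‖)
    (fun k => hK.aestronglyMeasurable.mul (by fun_prop : Measurable _).aestronglyMeasurable)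
    (hK.norm.const_mul C) (fun k => Eventually.of_forall fun u => ?_)
    (Eventually.of_forall fun u => ?_)
  · rw [norm_mul, mul_comm, Real.norm_eq_abs (g _)]
    exact mul_le_mul_of_nonneg_right (hC _) (norm_nonneg _)
  · have hu : Tendsto (fun k => x - b k * u) atTop (𝓝 x) := by
      simpa using tendsto_const_nhds.sub (hb.mul_const u)
    exact tendsto_const_nhds.mul (hgx.tendsto.comp hu)

lemma summable_floor_pow_rpow {c : ℝ} (hc : 1 < c) {β : ℝ} (hβ : β < 0) :
    Summable fun n : ℕ => (⌊c ^ n⌋₊ : ℝ) ^ β := by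
  have hc0 : 0 < c := by linarith
  have hgeo : Summable fun n : ℕ => (c ^ β) ^ n * 2 ^ (-β) :=
    (summable_geometric_of_lt_one (by positivity)
      (Real.rpow_lt_one_of_one_lt_of_neg hc hβ)).mul_right _
  refine Summable.of_nonneg_of_le (fun n => by positivity) (fun n => ?_) hgeo
  have hpow : 1 ≤ c ^ n := one_le_pow₀ hc.le
  have hfloor : c ^ n / 2 ≤ ⌊c ^ n⌋₊ := by
    have h1 : (1 : ℝ) ≤ ⌊c ^ n⌋₊ := by exact_mod_cast (Nat.one_le_floor_iff _).2 hpow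
    linarith [Nat.sub_one_lt_floor (c ^ n)]
  calc (⌊c ^ n⌋₊ : ℝ) ^ β ≤ (c ^ n / 2) ^ β :=
        Real.rpow_le_rpow_of_nonpos (by positivity) hfloor hβ.le
    _ = (c ^ β) ^ n * 2 ^ (-β) := by
        rw [Real.div_rpow (by positivity) zero_le_two, div_eq_mul_inv, ← Real.rpow_neg zero_le_two,
          Real.rpow_pow_comm hc0.le]

lemma Filter.Tendsto.cesaro_Icc {u : ℕ → ℝ} {l : ℝ} (hu : Tendsto u atTop (𝓝 l)) :
    Tendsto (fun n : ℕ => (∑ k ∈ Icc 1 n, u k) / n) atTop (𝓝 l) := by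
  refine ((hu.comp (tendsto_add_atTop_nat 1)).cesaro).congr fun n => ?_
  rw [← Ico_add_one_right_eq_Icc, sum_Ico_eq_sum_range]
  simp [div_eq_inv_mul, add_comm]

section Probability

variable {Ω : Type*} {mΩ : MeasurableSpace Ω} {μ : Measure Ω}

lemma integral_comp_eq_integral_density_mul {X : Ω → ℝ} (hX : AEMeasurable X μ) {g : ℝ → ℝ}
    (hg : Measurable g) (hg0 : ∀ t, 0 ≤ g t)
    (hlaw : μ.map X = volume.withDensity fun t => ENNReal.ofReal (g t))
    {φ : ℝ → ℝ} (hφ : Measurable φ) :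
    ∫ ω, φ (X ω) ∂μ = ∫ t, g t * φ t := by
  rw [← integral_map hX hφ.aestronglyMeasurable, hlaw,
    integral_withDensity_eq_integral_toReal_smul hg.ennreal_ofReal
      (Eventually.of_forall fun _ => ENNReal.ofReal_lt_top)]
  simp_rw [ENNReal.toReal_ofReal (hg0 _), smul_eq_mul]

lemma integral_parzenKernel_comp {X : Ω → ℝ} (hX : AEMeasurable X μ) {g : ℝ → ℝ}
    (hg : Measurable g) (hg0 : ∀ t, 0 ≤ g t)
    (hlaw : μ.map X = volume.withDensity fun t => ENNReal.ofReal (g t))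
    {K : ℝ → ℝ} (hK : Measurable K) {b : ℝ} (hb : 0 < b) (x : ℝ) :
    ∫ ω, parzenKernel K b x (X ω) ∂μ = ∫ u, K u * g (x - b * u) := by
  rw [integral_comp_eq_integral_density_mul hX hg hg0 hlaw (measurable_parzenKernel hK b x),
    integral_mul_parzenKernel K g hb x]

lemma tendsto_integral_parzenKernel_comp {X : ℕ → Ω → ℝ} (hX : ∀ k, AEMeasurable (X k) μ)
    {g : ℝ → ℝ} (hg : Measurable g) (hg0 : ∀ t, 0 ≤ g t) {x : ℝ} (hgx : ContinuousAt g x)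
    {C : ℝ} (hC : ∀ t, |g t| ≤ C)
    (hlaw : ∀ k, μ.map (X k) = volume.withDensity fun t => ENNReal.ofReal (g t))
    {K : ℝ → ℝ} (hKm : Measurable K) (hK : Integrable K) (hKint : ∫ t, K t = 1)
    {b : ℕ → ℝ} (hb : Tendsto b atTop (𝓝[>] 0)) :
    Tendsto (fun k => ∫ ω, parzenKernel K (b k) x (X k ω) ∂μ) atTop (𝓝 (g x)) :=
  (tendsto_integral_mul_comp_sub_mul hK hKint hg hgx hC
      (tendsto_nhds_of_tendsto_nhdsWithin hb)).congr'
    ((hb.eventually self_mem_nhdsWithin).mono fun k hk =>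
      (integral_parzenKernel_comp (hX k) hg hg0 (hlaw k) hKm hk x).symm)

lemma variance_le_mul_integral [IsProbabilityMeasure μ] {Y : Ω → ℝ}
    (hY : AEStronglyMeasurable Y μ) (h0 : 0 ≤ᵐ[μ] Y) {M : ℝ} (hM : ∀ᵐ ω ∂μ, Y ω ≤ M) :
    variance Y μ ≤ M * μ[Y] := by
  have hYint : Integrable Y μ := Integrable.of_bound hY M <| by
    filter_upwards [h0, hM] with ω hω0 hωM
    rwa [Real.norm_eq_abs, abs_of_nonneg hω0]
  calc variance Y μ ≤ μ[Y ^ 2] := variance_le_expectation_sq hY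
    _ ≤ μ[fun ω => M * Y ω] := by
      refine integral_mono_of_nonneg (Eventually.of_forall fun ω => sq_nonneg (Y ω))
        (hYint.const_mul M) ?_
      filter_upwards [h0, hM] with ω hω0 hωM
      rw [Pi.pow_apply, sq]
      exact mul_le_mul_of_nonneg_right hωM hω0
    _ = M * μ[Y] := integral_const_mul M _

lemma variance_parzenKernel_comp_le [IsProbabilityMeasure μ] {X : Ω → ℝ} (hX : AEMeasurable X μ)
    {g : ℝ → ℝ} (hg : Measurable g) (hg0 : ∀ t, 0 ≤ g t) {Cg : ℝ} (hCg : ∀ t, g t ≤ Cg)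
    (hlaw : μ.map X = volume.withDensity fun t => ENNReal.ofReal (g t))
    {K : ℝ → ℝ} (hKm : Measurable K) (hK0 : ∀ t, 0 ≤ K t) {CK : ℝ} (hCK : ∀ t, K t ≤ CK)
    (hK : Integrable K) (hKint : ∫ t, K t = 1) {b : ℝ} (hb : 0 < b) (x : ℝ) :
    variance (fun ω => parzenKernel K b x (X ω)) μ ≤ CK * Cg / b := by
  have hmean : ∫ u, K u * g (x - b * u) ≤ Cg :=
    calc ∫ u, K u * g (x - b * u) ≤ ∫ u, K u * Cg :=
          integral_mono_of_nonneg (Eventually.of_forall fun u => mul_nonneg (hK0 u) (hg0 _))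
            (hK.mul_const Cg)
            (Eventually.of_forall fun u => mul_le_mul_of_nonneg_left (hCg _) (hK0 u))
      _ = Cg := by rw [integral_mul_const, hKint, one_mul]
  have hCK0 : 0 ≤ CK / b := div_nonneg ((hK0 0).trans (hCK 0)) hb.le
  calc variance (fun ω => parzenKernel K b x (X ω)) μ
      ≤ CK / b * ∫ ω, parzenKernel K b x (X ω) ∂μ :=
        variance_le_mul_integral
          ((measurable_parzenKernel hKm b x).comp_aemeasurable hX).aestronglyMeasurable
          (Eventually.of_forall fun ω => parzenKernel_nonneg hK0 hb.le x _)
          (Eventually.of_forall fun ω => parzenKernel_le hCK hb.le x _)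
    _ ≤ CK / b * Cg := by
      rw [integral_parzenKernel_comp hX hg hg0 hlaw hKm hb x]
      exact mul_le_mul_of_nonneg_left hmean hCK0
    _ = CK * Cg / b := by ring

lemma variance_sum_Icc_le {Z : ℕ → Ω → ℝ} (hindep : Pairwise fun i j => IndepFun (Z i) (Z j) μ)
    (hL2 : ∀ k, MemLp (Z k) 2 μ) {β C : ℝ} (hβ : 0 ≤ β) (hC : 0 ≤ C)
    (hvar : ∀ k, 1 ≤ k → variance (Z k) μ ≤ C * (k : ℝ) ^ β) (N : ℕ) :
    variance (∑ k ∈ Icc 1 N, Z k) μ ≤ C * (N : ℝ) ^ β * N := by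
  rw [IndepFun.variance_sum (fun k _ => hL2 k) (fun i _ j _ hij => hindep hij)]
  calc ∑ k ∈ Icc 1 N, variance (Z k) μ ≤ ∑ k ∈ Icc 1 N, C * (N : ℝ) ^ β :=
        sum_le_sum fun k hk => by
          rw [mem_Icc] at hk
          refine (hvar k hk.1).trans ?_
          gcongr
          exact_mod_cast hk.2
    _ = C * (N : ℝ) ^ β * N := by simp [mul_comm]

lemma ae_tendsto_sub_integral_div_of_summable [IsFiniteMeasure μ] {W : ℕ → Ω → ℝ}
    (hW : ∀ n, MemLp (W n) 2 μ) {d : ℕ → ℝ} (hd : ∀ n, 0 < d n)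
    (hsum : Summable fun n => variance (W n) μ / d n ^ 2) :
    ∀ᵐ ω ∂μ, Tendsto (fun n => (W n ω - μ[W n]) / d n) atTop (𝓝 0) := by
  have hdev : ∀ p : ℕ, ∀ᵐ ω ∂μ, ∀ᶠ n in atTop, |W n ω - μ[W n]| < 1 / (p + 1) * d n := by
    intro p
    have hprob : ∀ n, μ {ω | 1 / (p + 1) * d n ≤ |W n ω - μ[W n]|}
        ≤ ENNReal.ofReal ((p + 1) ^ 2 * (variance (W n) μ / d n ^ 2)) := fun n =>
      (meas_ge_le_variance_div_sq (hW n) (by have := hd n; positivity)).trans_eq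
        (by congr 1; field_simp)
    have hfin : ∑' n, μ {ω | 1 / (p + 1) * d n ≤ |W n ω - μ[W n]|} ≠ ∞ := by
      refine ((ENNReal.tsum_le_tsum hprob).trans_lt ?_).ne
      rw [← ENNReal.ofReal_tsum_of_nonneg
        (fun n => by have := variance_nonneg (W n) μ; positivity) (hsum.mul_left _)]
      exact ENNReal.ofReal_lt_top
    filter_upwards [ae_eventually_notMem hfin] with ω hω
    exact hω.mono fun n hn => not_le.1 hn
  filter_upwards [ae_all_iff.2 hdev] with ω hω
  refine NormedAddGroup.tendsto_nhds_zero.2 fun e he => ?_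
  obtain ⟨p, hp⟩ := exists_nat_one_div_lt he
  filter_upwards [hω p] with n hn
  rw [norm_div, Real.norm_eq_abs, Real.norm_of_nonneg (hd n).le, div_lt_iff₀ (hd n)]
  exact hn.trans_le (mul_le_mul_of_nonneg_right hp.le (hd n).le)

lemma ae_tendsto_sum_Icc_floor_pow_div [IsFiniteMeasure μ] {Z : ℕ → Ω → ℝ}
    (hindep : Pairwise fun i j => IndepFun (Z i) (Z j) μ) (hL2 : ∀ k, MemLp (Z k) 2 μ)
    {β C : ℝ} (hβ0 : 0 ≤ β) (hβ1 : β < 1) (hC : 0 ≤ C)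
    (hvar : ∀ k, 1 ≤ k → variance (Z k) μ ≤ C * (k : ℝ) ^ β) {l : ℝ}
    (hmean : Tendsto (fun k => μ[Z k]) atTop (𝓝 l)) {c : ℝ} (hc : 1 < c) :
    ∀ᵐ ω ∂μ, Tendsto (fun n : ℕ => (∑ k ∈ Icc 1 ⌊c ^ n⌋₊, Z k ω) / ⌊c ^ n⌋₊) atTop (𝓝 l) := by
  set N : ℕ → ℕ := fun n => ⌊c ^ n⌋₊
  have hN : ∀ n, (0 : ℝ) < N n := fun n => by
    exact_mod_cast Nat.floor_pos.2 (one_le_pow₀ hc.le)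
  have hNtop : Tendsto N atTop atTop :=
    tendsto_nat_floor_atTop.comp (tendsto_pow_atTop_atTop_of_one_lt hc)
  have hS : ∀ n, MemLp (∑ k ∈ Icc 1 (N n), Z k) 2 μ := fun n => memLp_finsetSum' _ fun k _ => hL2 k
  have hsum : Summable fun n => variance (∑ k ∈ Icc 1 (N n), Z k) μ / (N n : ℝ) ^ 2 := by
    refine Summable.of_nonneg_of_le (fun n => div_nonneg (variance_nonneg _ _) (sq_nonneg _))
      (fun n => ?_) ((summable_floor_pow_rpow hc (sub_neg.2 hβ1)).mul_left C)
    calc variance (∑ k ∈ Icc 1 (N n), Z k) μ / (N n : ℝ) ^ 2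
        ≤ C * (N n : ℝ) ^ β * N n / (N n : ℝ) ^ 2 := by
          gcongr
          exact variance_sum_Icc_le hindep hL2 hβ0 hC hvar (N n)
      _ = C * (N n : ℝ) ^ (β - 1) := by
          rw [Real.rpow_sub (hN n), Real.rpow_one]
          field_simp
  have hmeanS : Tendsto (fun n => μ[∑ k ∈ Icc 1 (N n), Z k] / (N n : ℝ)) atTop (𝓝 l) := by
    simp_rw [Finset.sum_apply, integral_finsetSum _ fun k _ => (hL2 k).integrable one_le_two]
    exact hmean.cesaro_Icc.comp hNtop
  filter_upwards [ae_tendsto_sub_integral_div_of_summable hS hN hsum] with ω hω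
  simpa [← add_div, Finset.sum_apply] using hω.add hmeanS

lemma ae_tendsto_sum_Icc_div_of_variance_le [IsFiniteMeasure μ] {Z : ℕ → Ω → ℝ}
    (hindep : Pairwise fun i j => IndepFun (Z i) (Z j) μ) (hL2 : ∀ k, MemLp (Z k) 2 μ)
    (hZ0 : ∀ᵐ ω ∂μ, ∀ k, 0 ≤ Z k ω) {β C : ℝ} (hβ0 : 0 ≤ β) (hβ1 : β < 1) (hC : 0 ≤ C)
    (hvar : ∀ k, 1 ≤ k → variance (Z k) μ ≤ C * (k : ℝ) ^ β) {l : ℝ}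
    (hmean : Tendsto (fun k => μ[Z k]) atTop (𝓝 l)) :
    ∀ᵐ ω ∂μ, Tendsto (fun n : ℕ => (∑ k ∈ Icc 1 n, Z k ω) / n) atTop (𝓝 l) := by
  have hc : ∀ j : ℕ, 1 < 1 + 1 / ((j : ℝ) + 1) := fun j => by
    have : 0 < 1 / ((j : ℝ) + 1) := by positivity
    linarith
  have hclim : Tendsto (fun j : ℕ => 1 + 1 / ((j : ℝ) + 1)) atTop (𝓝 1) := by
    simpa using (tendsto_one_div_add_atTop_nhds_zero_nat (𝕜 := ℝ)).const_add (1 : ℝ)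
  filter_upwards [hZ0, ae_all_iff.2 fun j =>
    ae_tendsto_sum_Icc_floor_pow_div hindep hL2 hβ0 hβ1 hC hvar hmean (hc j)] with ω hω0 hω
  refine tendsto_div_of_monotone_of_tendsto_div_floor_pow _ l (fun m n hmn => ?_) _ hc hclim hω
  exact sum_le_sum_of_subset_of_nonneg (Icc_subset_Icc le_rfl hmn) fun k _ _ => hω0 k

lemma ae_tendsto_sum_parzenKernel_div [IsProbabilityMeasure μ] {X : ℕ → Ω → ℝ}
    (hXm : ∀ k, AEMeasurable (X k) μ) (hindep : Pairwise fun i j => IndepFun (X i) (X j) μ)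
    {g : ℝ → ℝ} (hgm : Measurable g) (hg0 : ∀ t, 0 ≤ g t) {Cg : ℝ} (hCg : ∀ t, |g t| ≤ Cg)
    (hlaw : ∀ k, μ.map (X k) = volume.withDensity fun t => ENNReal.ofReal (g t))
    {K : ℝ → ℝ} (hKm : Measurable K) (hK0 : ∀ t, 0 ≤ K t) {CK : ℝ} (hCK : ∀ t, K t ≤ CK)
    (hK : Integrable K) (hKint : ∫ t, K t = 1)
    {b : ℕ → ℝ} (hb0 : ∀ k, 0 ≤ b k) (hb : Tendsto b atTop (𝓝 0)) {β : ℝ} (hβ0 : 0 ≤ β)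
    (hβ1 : β < 1) (hbβ : ∀ k : ℕ, 1 ≤ k → (k : ℝ) ^ (-β) ≤ b k) {x : ℝ} (hgx : ContinuousAt g x) :
    ∀ᵐ ω ∂μ, Tendsto (fun n : ℕ => (∑ k ∈ Icc 1 n, parzenKernel K (b k) x (X k ω)) / n)
      atTop (𝓝 (g x)) := by
  have hφ : ∀ k, Measurable (parzenKernel K (b k) x) := fun k => measurable_parzenKernel hKm _ x
  have hbpos : ∀ k : ℕ, 1 ≤ k → 0 < b k := fun k hk =>
    (Real.rpow_pos_of_pos (by exact_mod_cast hk) _).trans_le (hbβ k hk)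
  have hC : 0 ≤ CK * Cg := mul_nonneg ((hK0 0).trans (hCK 0)) ((hg0 0).trans (le_of_abs_le (hCg 0)))
  have hvar : ∀ k : ℕ, 1 ≤ k →
      variance (fun ω => parzenKernel K (b k) x (X k ω)) μ ≤ CK * Cg * (k : ℝ) ^ β := by
    intro k hk
    have hinv : 1 / b k ≤ (k : ℝ) ^ β := by
      rw [one_div_le (hbpos k hk) (by positivity), one_div, ← Real.rpow_neg (Nat.cast_nonneg k)]
      exact hbβ k hk
    calc variance (fun ω => parzenKernel K (b k) x (X k ω)) μ ≤ CK * Cg / b k :=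
          variance_parzenKernel_comp_le (hXm k) hgm hg0 (fun t => le_of_abs_le (hCg t)) (hlaw k)
            hKm hK0 hCK hK hKint (hbpos k hk) x
      _ ≤ CK * Cg * (k : ℝ) ^ β := by
          rw [← mul_one_div]
          exact mul_le_mul_of_nonneg_left hinv hC
  have hbGT : Tendsto b atTop (𝓝[>] 0) := tendsto_nhdsWithin_iff.2
    ⟨hb, (eventually_ge_atTop 1).mono hbpos⟩
  exact ae_tendsto_sum_Icc_div_of_variance_le
    (fun i j hij => (hindep hij).comp (hφ i) (hφ j))
    (fun k => memLp_of_bounded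
      (Eventually.of_forall fun ω => ⟨parzenKernel_nonneg hK0 (hb0 k) x _,
        parzenKernel_le hCK (hb0 k) x _⟩) ((hφ k).comp_aemeasurable (hXm k)).aestronglyMeasurable 2)
    (Eventually.of_forall fun ω k => parzenKernel_nonneg hK0 (hb0 k) x _)
    hβ0 hβ1 hC hvar
    (tendsto_integral_parzenKernel_comp hXm hgm hg0 hgx hCg hlaw hKm hK hKint hbGT)

end Probability

theorem stmt_6_general
    {Ω : Type*} [MeasureSpace Ω] [IsProbabilityMeasure (ℙ : Measure Ω)]
    (α : ℝ) (hα0 : 0 < α) (hα1 : α < 1)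
    (h : ℕ → ℝ) (hband : ∀ n : ℕ, h n = (n : ℝ) ^ (-α))
    (X : ℕ → Ω → ℝ) (g : ℝ → ℝ)
    (hXmeas : ∀ n, Measurable (X n))
    (hXindep : iIndepFun X ℙ)
    (hgpos : ∀ t, 0 < g t)
    (hXlaw : ∀ n, Measure.map (X n) ℙ
      = volume.withDensity (fun t => ENNReal.ofReal (g t)))
    (K K' : ℝ → ℝ)
    (hKpos : ∀ t, 0 ≤ K t)
    (hKbdd : ∃ C, ∀ t, K t ≤ C)
    (hKderiv : ∀ t, HasDerivAt K (K' t) t)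
    (hKint : ∫ t, K t = 1)
    (hKmom4 : Integrable (fun t => t ^ 4 * K t))
    (g' : ℝ → ℝ)
    (hg : ∀ t, HasDerivAt g (g' t) t)
    (hgbdd : ∃ C, ∀ t, |g t| ≤ C)
    (ghat : ℕ → ℝ → Ω → ℝ)
    (hghat : ∀ n x ω, ghat n x ω
      = (1 / (n : ℝ)) * ∑ k ∈ Finset.Icc 1 n, (1 / h k) * K ((x - X k ω) / h k))
    :
    ∀ x : ℝ, ∀ᵐ ω ∂ℙ, Tendsto (fun n => ghat n x ω) atTop (𝓝 (g x)) := by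
  intro x
  obtain rfl : h = fun n : ℕ => (n : ℝ) ^ (-α) := funext hband
  obtain ⟨CK, hCK⟩ := hKbdd
  obtain ⟨Cg, hCg⟩ := hgbdd
  have hKm : Measurable K :=
    (continuous_iff_continuousAt.2 fun t => (hKderiv t).continuousAt).measurable
  have hgc : Continuous g := continuous_iff_continuousAt.2 fun t => (hg t).continuousAt
  have hKi : Integrable K := integrable_of_abs_le_of_integrable_pow_mul
    hKm.aestronglyMeasurable (fun t => (abs_of_nonneg (hKpos t)).trans_le (hCK t)) hKmom4
  have hh : Tendsto (fun n : ℕ => (n : ℝ) ^ (-α)) atTop (𝓝 0) :=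
    (tendsto_rpow_neg_atTop hα0).comp tendsto_natCast_atTop_atTop
  filter_upwards [ae_tendsto_sum_parzenKernel_div (fun k => (hXmeas k).aemeasurable)
    (fun i j hij => hXindep.indepFun hij) hgc.measurable (fun t => (hgpos t).le) hCg hXlaw
    hKm hKpos hCK hKi hKint (fun k => by positivity) hh hα0.le hα1 (fun k _ => le_rfl)
    hgc.continuousAt] with ω hω
  simpa only [hghat, parzenKernel, one_div_mul_eq_div] using hω

theorem stmt_6
    {Ω : Type*} [MeasureSpace Ω] [IsProbabilityMeasure (ℙ : Measure Ω)]
    (α : ℝ) (hα0 : 0 < α) (hα1 : α < 1)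
    (h : ℕ → ℝ) (hband : ∀ n : ℕ, h n = (n : ℝ) ^ (-α))
    (X : ℕ → Ω → ℝ) (g : ℝ → ℝ)
    (hXmeas : ∀ n, Measurable (X n))
    (hXindep : iIndepFun X ℙ)
    (hgpos : ∀ t, 0 < g t)
    (hXlaw : ∀ n, Measure.map (X n) ℙ
      = volume.withDensity (fun t => ENNReal.ofReal (g t)))
    (ε : ℕ → Ω → ℝ) (Y : ℕ → Ω → ℝ) (f : ℝ → ℝ) (σ : ℝ)
    (hmodel : ∀ n ω, Y n ω = f (X n ω) + ε n ω)
    (hεmeas : ∀ n, Measurable (ε n))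
    (hεindep : iIndepFun ε ℙ)
    (hεident : ∀ n, IdentDistrib (ε n) (ε 0) ℙ ℙ)
    (hεL2 : ∀ n, MemLp (ε n) 2 ℙ)
    (hεmean : ∀ n, ∫ ω, ε n ω ∂ℙ = 0)
    (hεvar : ∀ n, ∫ ω, (ε n ω) ^ 2 ∂ℙ = σ ^ 2)
    (hXε : IndepFun (fun ω k => X k ω) (fun ω k => ε k ω) ℙ)
    (K K' : ℝ → ℝ)
    (hKpos : ∀ t, 0 ≤ K t)
    (hKsymm : ∀ t, K (-t) = K t)
    (hKbdd : ∃ C, ∀ t, K t ≤ C)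
    (hKderiv : ∀ t, HasDerivAt K (K' t) t)
    (hK'bdd : ∃ C, ∀ t, |K' t| ≤ C)
    (hKint : ∫ t, K t = 1)
    (hK'int : ∫ t, K' t = 0)
    (hK'mom1 : ∫ t, t * K' t = -1)
    (hK'mom2 : ∫ t, t ^ 2 * K' t = 0)
    (hKmom4 : Integrable (fun t => t ^ 4 * K t))
    (hK'mom4 : Integrable (fun t => t ^ 4 * |K' t|))
    (f' f'' : ℝ → ℝ)
    (hf : ∀ t, HasDerivAt f (f' t) t) (hf' : ∀ t, HasDerivAt f' (f'' t) t)
    (hfbdd : ∃ C, ∀ t, |f t| ≤ C) (hf'bdd : ∃ C, ∀ t, |f' t| ≤ C)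
    (hf''bdd : ∃ C, ∀ t, |f'' t| ≤ C)
    (g' g'' : ℝ → ℝ)
    (hg : ∀ t, HasDerivAt g (g' t) t) (hg' : ∀ t, HasDerivAt g' (g'' t) t)
    (hgbdd : ∃ C, ∀ t, |g t| ≤ C) (hg'bdd : ∃ C, ∀ t, |g' t| ≤ C)
    (hg''bdd : ∃ C, ∀ t, |g'' t| ≤ C)
    (ghat : ℕ → ℝ → Ω → ℝ)
    (hghat : ∀ n x ω, ghat n x ω
      = (1 / (n : ℝ)) * ∑ k ∈ Finset.Icc 1 n, (1 / h k) * K ((x - X k ω) / h k))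
    :
    ∀ x : ℝ, ∀ᵐ ω ∂ℙ, Tendsto (fun n => ghat n x ω) atTop (𝓝 (g x)) :=
  stmt_6_general α hα0 hα1 h hband X g hXmeas hXindep hgpos hXlaw K K' hKpos hKbdd hKderiv hKint
    hKmom4 g' hg hgbdd ghat hghat
end

section
/- Variance normalization for the kernel-derivative sum: with a_k(x) = f(X_k)·(1/h_k²)K′((x−X_k)/h_k) and A_n(x) = ∑_{k=1}^n a_k(x), under assumptions (A1)–(A2) and with (X_k) i.i.d. with density g, for every x ∈ ℝ, lim_{n→∞} Var(A_n(x))/n^{1+3α} = ξ² f²(x) g(x)/(1+3α), where ξ² = ∫(K′(y))²dy. -/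
open MeasureTheory ProbabilityTheory Filter Real Finset Asymptotics
open scoped ENNReal NNReal Topology

/-! By independence and identical distribution, `Var A_n(x)` is the sum over `k ≤ n` of the
variance of `a_k(x)` under the density `g`. Substituting `y = x - h u`, that variance is
`h⁻³ ∫ (f² g)(x - h u) K'(u)² du - h⁻² (∫ (g f)(x - h u) K'(u) du)²`, so `h³ Var` tends to
`f(x)² g(x) ξ²` as `h → 0⁺` (dominated convergence for the first term, the second is `O(h)`).
Hence `Var a_k(x) = k^{3α} v_k` with `v_k → f(x)² g(x) ξ²`, and the weighted Cesàro limit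
`∑_{k ≤ n} k^p v_k / n^{p+1} → L / (p + 1)`, which comes from comparing `∑ k^p` with `∫ t^p`,
gives the result. -/

theorem sum_Icc_one_eq_sum_range {M : Type*} [AddCommMonoid M] (F : ℕ → M) (n : ℕ) :
    ∑ k ∈ Icc 1 n, F k = ∑ i ∈ range n, F (i + 1) := by
  rw [range_eq_Ico, sum_Ico_add' F 0 n 1]
  rfl

theorem integral_rpow_le_sum_Icc {p : ℝ} (hp : 0 < p) (n : ℕ) :
    (n : ℝ) ^ (p + 1) / (p + 1) ≤ ∑ k ∈ Icc 1 n, (k : ℝ) ^ p := by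
  have hmono : MonotoneOn (fun t : ℝ => t ^ p) (Set.Icc 0 (0 + n)) := fun s hs t _ hst =>
    rpow_le_rpow hs.1 hst hp.le
  have := hmono.integral_le_sum
  rw [integral_rpow (Or.inl (by linarith))] at this
  simpa [sum_Icc_one_eq_sum_range, zero_rpow (by linarith : p + 1 ≠ 0), add_comm] using this

theorem sum_Icc_rpow_le_integral {p : ℝ} (hp : 0 < p) (n : ℕ) :
    ∑ k ∈ Icc 1 n, (k : ℝ) ^ p ≤ ((n : ℝ) + 1) ^ (p + 1) / (p + 1) := by
  have hmono : MonotoneOn (fun t : ℝ => t ^ p) (Set.Icc 0 (0 + (n + 1 : ℕ))) :=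
    fun s hs t _ hst => rpow_le_rpow hs.1 hst hp.le
  have := hmono.sum_le_integral
  rw [integral_rpow (Or.inl (by linarith)), sum_range_succ'] at this
  simpa [sum_Icc_one_eq_sum_range, zero_rpow hp.ne', zero_rpow (by linarith : p + 1 ≠ 0)]
    using this

theorem tendsto_sum_Icc_rpow_div_rpow {p : ℝ} (hp : 0 < p) :
    Tendsto (fun n : ℕ => (∑ k ∈ Icc 1 n, (k : ℝ) ^ p) / (n : ℝ) ^ (p + 1))
      atTop (𝓝 (1 / (p + 1))) := by
  have hratio : Tendsto (fun n : ℕ => ((n : ℝ) + 1) / n) atTop (𝓝 1) := by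
    simpa using tendsto_natCast_div_add_atTop (1 : ℝ) |>.inv₀ one_ne_zero
  have hupper : Tendsto (fun n : ℕ => (((n : ℝ) + 1) / n) ^ (p + 1) / (p + 1)) atTop
      (𝓝 (1 / (p + 1))) := by
    simpa using (hratio.rpow_const (Or.inl one_ne_zero)).div_const (p + 1)
  refine tendsto_of_tendsto_of_tendsto_of_le_of_le' tendsto_const_nhds hupper ?_ ?_
  all_goals
    filter_upwards [eventually_gt_atTop 0] with n hn
    have hnp : (0 : ℝ) < (n : ℝ) ^ (p + 1) := rpow_pos_of_pos (Nat.cast_pos.2 hn) _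
  · rw [le_div_iff₀ hnp, div_mul_eq_mul_div, one_mul]
    exact integral_rpow_le_sum_Icc hp n
  · rw [div_rpow (by positivity) (by positivity), div_div, mul_comm, ← div_div]
    gcongr
    exact sum_Icc_rpow_le_integral hp n

theorem tendsto_sum_Icc_rpow_mul_div_rpow {p : ℝ} (hp : 0 < p) {v : ℕ → ℝ} {L : ℝ}
    (hv : Tendsto v atTop (𝓝 L)) :
    Tendsto (fun n : ℕ => (∑ k ∈ Icc 1 n, (k : ℝ) ^ p * v k) / (n : ℝ) ^ (p + 1))
      atTop (𝓝 (L / (p + 1))) := by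
  rw [div_eq_mul_one_div, ← add_zero (L * _)]
  set S : ℕ → ℝ := fun n => ∑ k ∈ Icc 1 n, (k : ℝ) ^ p
  set R : ℕ → ℝ := fun n => ∑ k ∈ Icc 1 n, (k : ℝ) ^ p * (v k - L)
  have hsplit : ∀ n : ℕ, ∑ k ∈ Icc 1 n, (k : ℝ) ^ p * v k = L * S n + R n := fun n => by
    simp only [S, R, mul_sum, ← sum_add_distrib]
    exact sum_congr rfl fun k _ => by ring
  have hS : Tendsto (fun n => S n / (n : ℝ) ^ (p + 1)) atTop (𝓝 (1 / (p + 1))) :=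
    tendsto_sum_Icc_rpow_div_rpow hp
  have hS_top : Tendsto S atTop atTop :=
    tendsto_atTop_mono (integral_rpow_le_sum_Icc hp) <|
      ((tendsto_rpow_atTop (by linarith)).comp tendsto_natCast_atTop_atTop).atTop_div_const
        (by linarith)
  have hRS : R =o[atTop] S := by
    have hterm : (fun i : ℕ => ((i + 1 : ℕ) : ℝ) ^ p * (v (i + 1) - L)) =o[atTop]
        fun i : ℕ => ((i + 1 : ℕ) : ℝ) ^ p := by
      simpa using (isBigO_refl (fun i : ℕ => ((i + 1 : ℕ) : ℝ) ^ p) atTop).mul_isLittleO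
        ((isLittleO_one_iff ℝ).2 (tendsto_sub_nhds_zero_iff.2 (hv.comp (tendsto_add_atTop_nat 1))))
    simp only [R, S, sum_Icc_one_eq_sum_range] at hS_top ⊢
    exact hterm.sum_range (fun i => by positivity) hS_top
  have hR : Tendsto (fun n => R n / (n : ℝ) ^ (p + 1)) atTop (𝓝 0) :=
    (hRS.trans_isBigO (isBigO_of_div_tendsto_nhds (g := fun n : ℕ => (n : ℝ) ^ (p + 1))
      ((eventually_gt_atTop 0).mono fun n hn hzero =>
        absurd hzero (rpow_pos_of_pos (Nat.cast_pos.2 hn) _).ne') _ hS)).tendsto_div_nhds_zero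
  refine ((hS.const_mul L).add hR).congr fun n => ?_
  rw [hsplit, add_div, mul_div_assoc]

theorem tendsto_natCast_rpow_neg_nhdsGT_zero {α : ℝ} (hα : 0 < α) :
    Tendsto (fun n : ℕ => (n : ℝ) ^ (-α)) atTop (𝓝[>] 0) :=
  tendsto_nhdsWithin_iff.2 ⟨(tendsto_rpow_neg_atTop hα).comp tendsto_natCast_atTop_atTop,
    (eventually_gt_atTop 0).mono fun _ hn => rpow_pos_of_pos (Nat.cast_pos.2 hn) _⟩

theorem integral_mul_comp_sub_div (F Ψ : ℝ → ℝ) (x : ℝ) {h : ℝ} (hh : 0 < h) :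
    ∫ y, F y * Ψ ((x - y) / h) = h * ∫ u, F (x - h * u) * Ψ u := by
  have hback : ∀ y, x - h * ((x - y) / h) = y := fun y => by field_simp; ring
  calc ∫ y, F y * Ψ ((x - y) / h)
      = ∫ y, (fun s => F (x - h * (s / h)) * Ψ (s / h)) (x - y) := by simp only [hback]
    _ = ∫ s, F (x - h * (s / h)) * Ψ (s / h) :=
      integral_sub_left_eq_self (fun s => F (x - h * (s / h)) * Ψ (s / h)) volume x
    _ = h * ∫ u, F (x - h * u) * Ψ u := by
      rw [Measure.integral_comp_div (fun u => F (x - h * u) * Ψ u), abs_of_pos hh, smul_eq_mul]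

theorem integral_withDensity_ofReal_eq_integral_mul {X : Type*} [MeasurableSpace X]
    {μ : Measure X} {g : X → ℝ} (hg : Measurable g) (hg0 : ∀ t, 0 ≤ g t) (ψ : X → ℝ) :
    ∫ y, ψ y ∂μ.withDensity (fun t => ENNReal.ofReal (g t)) = ∫ y, g y * ψ y ∂μ := by
  rw [integral_withDensity_eq_integral_toReal_smul hg.ennreal_ofReal
    (Eventually.of_forall fun _ => ENNReal.ofReal_lt_top)]
  simp only [ENNReal.toReal_ofReal (hg0 _), smul_eq_mul]

theorem MeasureTheory.Integrable.of_integrable_id_mul {φ : ℝ → ℝ} {C : ℝ}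
    (hφ : Integrable fun t => t * φ t) (hm : AEStronglyMeasurable φ) (hb : ∀ t, |φ t| ≤ C) :
    Integrable φ := by
  have hdom : Integrable fun t => |t * φ t| + (Set.Icc (-1 : ℝ) 1).indicator (fun _ => C) t :=
    hφ.abs.add ((integrableOn_const (by simp)).integrable_indicator measurableSet_Icc)
  refine hdom.mono' hm (Eventually.of_forall fun t => ?_)
  rw [Real.norm_eq_abs, abs_mul]
  by_cases ht : t ∈ Set.Icc (-1 : ℝ) 1
  · rw [Set.indicator_of_mem ht]
    linarith [hb t, mul_nonneg (abs_nonneg t) (abs_nonneg (φ t))]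
  · have h1 : 1 ≤ |t| := by
      by_contra! hlt
      exact ht (Set.mem_Icc.2 ⟨by linarith [neg_abs_le t], by linarith [le_abs_self t]⟩)
    rw [Set.indicator_of_notMem ht]
    nlinarith [abs_nonneg (φ t)]

theorem continuous_integral_comp_sub_mul_mul {φ ψ : ℝ → ℝ} {C : ℝ} (hφ : Continuous φ)
    (hφb : ∀ t, |φ t| ≤ C) (hψ : Integrable ψ) (x : ℝ) :
    Continuous fun s => ∫ u, φ (x - s * u) * ψ u := by
  refine continuous_of_dominated (bound := fun u => C * |ψ u|) (fun s => ?_)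
    (fun s => Eventually.of_forall fun u => ?_) (hψ.abs.const_mul C)
    (Eventually.of_forall fun u => by fun_prop)
  · exact (hφ.comp (by fun_prop)).aestronglyMeasurable.mul hψ.aestronglyMeasurable
  · rw [Real.norm_eq_abs, abs_mul]
    exact mul_le_mul_of_nonneg_right (hφb _) (abs_nonneg _)

theorem ProbabilityTheory.iIndepFun.variance_sum_comp_of_map_eq {Ω ι : Type*}
    [MeasurableSpace Ω] {μ : Measure Ω} {ν : Measure ℝ} {X : ι → Ω → ℝ} (hX : iIndepFun X μ)
    (hXmeas : ∀ i, Measurable (X i)) (hlaw : ∀ i, μ.map (X i) = ν) {φ : ι → ℝ → ℝ}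
    (hφ : ∀ i, Measurable (φ i)) {s : Finset ι} (hL2 : ∀ i ∈ s, MemLp (φ i) 2 ν) :
    Var[fun ω => ∑ i ∈ s, φ i (X i ω); μ] = ∑ i ∈ s, Var[φ i; ν] := by
  have hpres : ∀ i, MeasurePreserving (X i) μ ν := fun i => ⟨hXmeas i, hlaw i⟩
  rw [← sum_fn, IndepFun.variance_sum (X := fun i ω => φ i (X i ω))
    (fun i hi => (hL2 i hi).comp_measurePreserving (hpres i))
    fun i _ j _ hij => (hX.indepFun hij).comp (hφ i) (hφ j)]
  exact sum_congr rfl fun i _ => (hpres i).variance_fun_comp (hφ i).aemeasurable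

/-- `kernelDerivTerm f K' (h k) x (X k ω)` is the summand `a_k(x)` of the paper. -/
noncomputable def kernelDerivTerm (f K' : ℝ → ℝ) (h x y : ℝ) : ℝ :=
  f y * ((1 / h ^ 2) * K' ((x - y) / h))

section KernelDerivTerm

variable {f g K' : ℝ → ℝ} {h : ℝ}

theorem measurable_kernelDerivTerm (hf : Measurable f) (hK' : Measurable K') (h x : ℝ) :
    Measurable (kernelDerivTerm f K' h x) :=
  hf.mul (measurable_const.mul (hK'.comp ((measurable_const.sub measurable_id).div_const h)))

theorem abs_kernelDerivTerm_le {Cf CK : ℝ} (hf : ∀ t, |f t| ≤ Cf) (hK' : ∀ t, |K' t| ≤ CK)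
    (h x y : ℝ) : |kernelDerivTerm f K' h x y| ≤ Cf * (1 / h ^ 2 * CK) := by
  rw [kernelDerivTerm, abs_mul, abs_mul, abs_of_nonneg (by positivity : (0 : ℝ) ≤ 1 / h ^ 2)]
  exact mul_le_mul (hf y) (mul_le_mul_of_nonneg_left (hK' _) (by positivity))
    (by positivity) ((abs_nonneg _).trans (hf y))

theorem memLp_kernelDerivTerm (μ : Measure ℝ) [IsFiniteMeasure μ] {Cf CK : ℝ}
    (hf : Measurable f) (hfb : ∀ t, |f t| ≤ Cf) (hK' : Measurable K') (hK'b : ∀ t, |K' t| ≤ CK)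
    (h x : ℝ) (p : ℝ≥0∞) : MemLp (kernelDerivTerm f K' h x) p μ :=
  .of_bound (measurable_kernelDerivTerm hf hK' h x).aestronglyMeasurable _
    (Eventually.of_forall fun _ => (Real.norm_eq_abs _).trans_le
      (abs_kernelDerivTerm_le hfb hK'b h x _))

theorem pow_three_mul_integral_mul_kernelDerivTerm_sq (f g K' : ℝ → ℝ) (x : ℝ) (hh : 0 < h) :
    h ^ 3 * ∫ y, g y * kernelDerivTerm f K' h x y ^ 2
      = ∫ u, f (x - h * u) ^ 2 * g (x - h * u) * K' u ^ 2 := by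
  have hexpand : ∀ y, g y * kernelDerivTerm f K' h x y ^ 2
      = (1 / h ^ 2) ^ 2 * ((f y ^ 2 * g y) * K' ((x - y) / h) ^ 2) := fun y => by
    rw [kernelDerivTerm]; ring
  simp only [hexpand, integral_const_mul,
    integral_mul_comp_sub_div (fun y => f y ^ 2 * g y) (fun u => K' u ^ 2) x hh]
  field_simp

theorem abs_mul_integral_mul_kernelDerivTerm_le {C : ℝ} (hfg : ∀ t, |g t * f t| ≤ C)
    (hK' : Integrable K') (x : ℝ) (hh : 0 < h) :
    |h * ∫ y, g y * kernelDerivTerm f K' h x y| ≤ C * ∫ u, |K' u| := by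
  have hexpand : ∀ y, g y * kernelDerivTerm f K' h x y
      = 1 / h ^ 2 * ((g y * f y) * K' ((x - y) / h)) := fun y => by
    rw [kernelDerivTerm]; ring
  have hrescale : h * ∫ y, g y * kernelDerivTerm f K' h x y
      = ∫ u, g (x - h * u) * f (x - h * u) * K' u := by
    simp only [hexpand, integral_const_mul,
      integral_mul_comp_sub_div (fun y => g y * f y) K' x hh]
    field_simp
  rw [hrescale, ← Real.norm_eq_abs, ← integral_const_mul]
  refine norm_integral_le_of_norm_le (hK'.abs.const_mul C) (Eventually.of_forall fun u => ?_)
  rw [Real.norm_eq_abs, abs_mul]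
  exact mul_le_mul_of_nonneg_right (hfg _) (abs_nonneg _)

theorem tendsto_pow_three_mul_variance_kernelDerivTerm {Cf Cg CK : ℝ}
    [IsProbabilityMeasure (volume.withDensity fun t => ENNReal.ofReal (g t))]
    (hf : Continuous f) (hfb : ∀ t, |f t| ≤ Cf) (hg : Continuous g) (hg0 : ∀ t, 0 ≤ g t)
    (hgb : ∀ t, |g t| ≤ Cg) (hK'm : Measurable K') (hK'b : ∀ t, |K' t| ≤ CK)
    (hK'i : Integrable K') (x : ℝ) :
    Tendsto (fun h => h ^ 3 *
        Var[kernelDerivTerm f K' h x; volume.withDensity fun t => ENNReal.ofReal (g t)])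
      (𝓝[>] 0) (𝓝 (f x ^ 2 * g x * ∫ u, K' u ^ 2)) := by
  have hCf : 0 ≤ Cf := (abs_nonneg _).trans (hfb 0)
  have hCg : 0 ≤ Cg := (abs_nonneg _).trans (hgb 0)
  have hsecond : Tendsto (fun h => ∫ u, f (x - h * u) ^ 2 * g (x - h * u) * K' u ^ 2)
      (𝓝[>] 0) (𝓝 (f x ^ 2 * g x * ∫ u, K' u ^ 2)) := by
    have hK'sq : Integrable fun u => K' u ^ 2 := by
      simpa [sq] using hK'i.bdd_mul hK'm.aestronglyMeasurable
        (Eventually.of_forall fun t => (Real.norm_eq_abs _).trans_le (hK'b t))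
    have hbound : ∀ t, |f t ^ 2 * g t| ≤ Cf ^ 2 * Cg := fun t => by
      rw [abs_mul, abs_pow]
      exact mul_le_mul (pow_le_pow_left₀ (abs_nonneg _) (hfb t) 2) (hgb t) (abs_nonneg _)
        (by positivity)
    have := ((continuous_integral_comp_sub_mul_mul (hf.pow 2 |>.mul hg) hbound hK'sq x).tendsto 0)
    simpa [integral_const_mul] using this.mono_left nhdsWithin_le_nhds
  set B := Cg * Cf * ∫ u, |K' u|
  have hfirst : Tendsto (fun h => h * (h * ∫ y, g y * kernelDerivTerm f K' h x y) ^ 2)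
      (𝓝[>] 0) (𝓝 0) := by
    have hlin : Tendsto (fun h : ℝ => h * B ^ 2) (𝓝[>] 0) (𝓝 0) := by
      have : Tendsto (fun h : ℝ => h * B ^ 2) (𝓝 0) (𝓝 (0 * B ^ 2)) := tendsto_id.mul_const _
      simpa using this.mono_left nhdsWithin_le_nhds
    refine squeeze_zero_norm' ?_ hlin
    filter_upwards [self_mem_nhdsWithin] with h (hh : 0 < h)
    rw [Real.norm_eq_abs, abs_mul, abs_of_pos hh, abs_pow]
    gcongr
    exact abs_mul_integral_mul_kernelDerivTerm_le (fun t => by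
      rw [abs_mul]; exact mul_le_mul (hgb t) (hfb t) (abs_nonneg _) hCg) hK'i x hh
  rw [← sub_zero (f x ^ 2 * g x * _)]
  refine (hsecond.sub hfirst).congr' ?_
  filter_upwards [self_mem_nhdsWithin] with h (hh : 0 < h)
  rw [variance_eq_sub (memLp_kernelDerivTerm _ hf.measurable hfb hK'm hK'b h x 2),
    integral_withDensity_ofReal_eq_integral_mul hg.measurable hg0,
    integral_withDensity_ofReal_eq_integral_mul hg.measurable hg0,
    ← pow_three_mul_integral_mul_kernelDerivTerm_sq f g K' x hh]
  simp only [Pi.pow_apply]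
  ring

end KernelDerivTerm

theorem stmt_11_general
    {Ω : Type*} [MeasureSpace Ω] [IsProbabilityMeasure (ℙ : Measure Ω)]
    (α : ℝ) (hα0 : 0 < α)
    (h : ℕ → ℝ) (hband : ∀ n : ℕ, h n = (n : ℝ) ^ (-α))
    (X : ℕ → Ω → ℝ) (g : ℝ → ℝ)
    (hXmeas : ∀ n, Measurable (X n))
    (hXindep : iIndepFun X ℙ)
    (hgpos : ∀ t, 0 < g t)
    (hXlaw : ∀ n, Measure.map (X n) ℙ
      = volume.withDensity (fun t => ENNReal.ofReal (g t)))
    (f : ℝ → ℝ)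
    (K K' : ℝ → ℝ)
    (hKderiv : ∀ t, HasDerivAt K (K' t) t)
    (hK'bdd : ∃ C, ∀ t, |K' t| ≤ C)
    (hK'mom1 : ∫ t, t * K' t = -1)
    (f' : ℝ → ℝ)
    (hf : ∀ t, HasDerivAt f (f' t) t)
    (hfbdd : ∃ C, ∀ t, |f t| ≤ C)
    (g' : ℝ → ℝ)
    (hg : ∀ t, HasDerivAt g (g' t) t)
    (hgbdd : ∃ C, ∀ t, |g t| ≤ C)
    (ξ2 : ℝ) (hξ2 : ξ2 = ∫ t, (K' t) ^ 2)
    (a : ℕ → ℝ → Ω → ℝ)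
    (ha : ∀ n x ω, a n x ω = f (X n ω) * ((1 / h n ^ 2) * K' ((x - X n ω) / h n)))
    (A : ℕ → ℝ → Ω → ℝ)
    (hA : ∀ n x ω, A n x ω = ∑ k ∈ Finset.Icc 1 n, a k x ω)
    :
    ∀ x : ℝ,
      Tendsto (fun n : ℕ => variance (A n x) ℙ / (n : ℝ) ^ (1 + 3 * α))
        atTop (𝓝 (ξ2 * f x ^ 2 * g x / (1 + 3 * α))) := by
  intro x
  obtain ⟨Cf, hCf⟩ := hfbdd
  obtain ⟨Cg, hCg⟩ := hgbdd
  obtain ⟨CK, hCK⟩ := hK'bdd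
  have hfc : Continuous f := continuous_iff_continuousAt.2 fun t => (hf t).continuousAt
  have hgc : Continuous g := continuous_iff_continuousAt.2 fun t => (hg t).continuousAt
  have hK'meas : Measurable K' := funext (fun t => (hKderiv t).deriv) ▸ measurable_deriv K
  -- a Bochner integral that is nonzero forces integrability
  have hK'integrable : Integrable K' := .of_integrable_id_mul
    (.of_integral_ne_zero (by rw [hK'mom1]; norm_num)) hK'meas.aestronglyMeasurable hCK
  set ν := volume.withDensity fun t => ENNReal.ofReal (g t)
  have : IsProbabilityMeasure ν :=
    hXlaw 0 ▸ Measure.isProbabilityMeasure_map (hXmeas 0).aemeasurable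
  have hsum : ∀ n, variance (A n x) ℙ = ∑ k ∈ Icc 1 n, Var[kernelDerivTerm f K' (h k) x; ν] :=
    fun n => by
      rw [show A n x = fun ω => ∑ k ∈ Icc 1 n, kernelDerivTerm f K' (h k) x (X k ω) from
        funext fun ω => (hA n x ω).trans (sum_congr rfl fun k _ => ha k x ω)]
      exact hXindep.variance_sum_comp_of_map_eq hXmeas hXlaw
        (fun k => measurable_kernelDerivTerm hfc.measurable hK'meas _ x)
        fun k _ => memLp_kernelDerivTerm ν hfc.measurable hCf hK'meas hCK _ x 2
  have hh : Tendsto h atTop (𝓝[>] 0) :=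
    (tendsto_natCast_rpow_neg_nhdsGT_zero hα0).congr fun k => (hband k).symm
  have hlim := (tendsto_pow_three_mul_variance_kernelDerivTerm hfc hCf hgc (fun t => (hgpos t).le)
    hCg hK'meas hCK hK'integrable x).comp hh
  have hscale : ∀ k : ℕ, 1 ≤ k → (k : ℝ) ^ (3 * α) * h k ^ 3 = 1 := fun k hk => by
    rw [hband, ← rpow_natCast, ← rpow_mul (Nat.cast_nonneg k), ← rpow_add (Nat.cast_pos.2 hk)]
    ring_nf
    exact rpow_zero _
  rw [hξ2, show (∫ t, K' t ^ 2) * f x ^ 2 * g x = f x ^ 2 * g x * ∫ t, K' t ^ 2 by ring,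
    add_comm 1]
  refine (tendsto_sum_Icc_rpow_mul_div_rpow (by positivity) hlim).congr fun n => ?_
  rw [hsum]
  congr 1
  refine sum_congr rfl fun k hk => ?_
  rw [Function.comp_apply, ← mul_assoc, hscale k (mem_Icc.1 hk).1, one_mul]

theorem stmt_11
    {Ω : Type*} [MeasureSpace Ω] [IsProbabilityMeasure (ℙ : Measure Ω)]
    (α : ℝ) (hα0 : 0 < α) (hα1 : α < 1)
    (h : ℕ → ℝ) (hband : ∀ n : ℕ, h n = (n : ℝ) ^ (-α))
    (X : ℕ → Ω → ℝ) (g : ℝ → ℝ)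
    (hXmeas : ∀ n, Measurable (X n))
    (hXindep : iIndepFun X ℙ)
    (hgpos : ∀ t, 0 < g t)
    (hXlaw : ∀ n, Measure.map (X n) ℙ
      = volume.withDensity (fun t => ENNReal.ofReal (g t)))
    (f : ℝ → ℝ)
    (K K' : ℝ → ℝ)
    (hKpos : ∀ t, 0 ≤ K t)
    (hKsymm : ∀ t, K (-t) = K t)
    (hKbdd : ∃ C, ∀ t, K t ≤ C)
    (hKderiv : ∀ t, HasDerivAt K (K' t) t)
    (hK'bdd : ∃ C, ∀ t, |K' t| ≤ C)
    (hKint : ∫ t, K t = 1)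
    (hK'int : ∫ t, K' t = 0)
    (hK'mom1 : ∫ t, t * K' t = -1)
    (hK'mom2 : ∫ t, t ^ 2 * K' t = 0)
    (hKmom4 : Integrable (fun t => t ^ 4 * K t))
    (hK'mom4 : Integrable (fun t => t ^ 4 * |K' t|))
    (f' f'' : ℝ → ℝ)
    (hf : ∀ t, HasDerivAt f (f' t) t) (hf' : ∀ t, HasDerivAt f' (f'' t) t)
    (hfbdd : ∃ C, ∀ t, |f t| ≤ C) (hf'bdd : ∃ C, ∀ t, |f' t| ≤ C)
    (hf''bdd : ∃ C, ∀ t, |f'' t| ≤ C)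
    (g' g'' : ℝ → ℝ)
    (hg : ∀ t, HasDerivAt g (g' t) t) (hg' : ∀ t, HasDerivAt g' (g'' t) t)
    (hgbdd : ∃ C, ∀ t, |g t| ≤ C) (hg'bdd : ∃ C, ∀ t, |g' t| ≤ C)
    (hg''bdd : ∃ C, ∀ t, |g'' t| ≤ C)
    (ξ2 : ℝ) (hξ2 : ξ2 = ∫ t, (K' t) ^ 2)
    (a : ℕ → ℝ → Ω → ℝ)
    (ha : ∀ n x ω, a n x ω = f (X n ω) * ((1 / h n ^ 2) * K' ((x - X n ω) / h n)))
    (A : ℕ → ℝ → Ω → ℝ)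
    (hA : ∀ n x ω, A n x ω = ∑ k ∈ Finset.Icc 1 n, a k x ω)
    :
    ∀ x : ℝ,
      Tendsto (fun n : ℕ => variance (A n x) ℙ / (n : ℝ) ^ (1 + 3 * α))
        atTop (𝓝 (ξ2 * f x ^ 2 * g x / (1 + 3 * α))) :=
  stmt_11_general α hα0 h hband X g hXmeas hXindep hgpos hXlaw f K K' hKderiv hK'bdd hK'mom1 f' hf
    hfbdd g' hg hgbdd ξ2 hξ2 a ha A hA
end

section
/- Uniform deterministic bias bound: let f : ℝ → ℝ be bounded, twice differentiable with bounded second derivative, and let K be differentiable with bounded derivative K′ satisfying ∫K′(y)dy = 0, ∫yK′(y)dy = −1, and τ² = (1/2)∫y²|K′(y)|dy < ∞. Then for every h > 0 and every x ∈ ℝ, |(1/h)∫_ℝ f(x−hy)K′(y)dy − f′(x)| ≤ M_f τ² h, where M_f = sup_{x∈ℝ}|f″(x)|. -/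
/-!
Expand `f (x - h y) = f x - h y f' x + R y` to second order. Against `K'`, the moment conditions
`∫ K' = 0` and `∫ y K' = -1` turn the first two terms into `h f' x`, so the error is
`(1/h) ∫ R K'`, and `|R y| ≤ (M_f / 2) h² y²` gives the bound `M_f τ² h`. The Taylor bound comes
from convexity: `f ± (M/2) t²` has nonnegative second derivative, hence lies above its tangents.
-/

open MeasureTheory Set

theorem add_mul_sub_le_of_hasDerivAt2_nonneg {g g' g'' : ℝ → ℝ}
    (hg : ∀ t, HasDerivAt g (g' t) t) (hg' : ∀ t, HasDerivAt g' (g'' t) t)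
    (hg'' : ∀ t, 0 ≤ g'' t) (a b : ℝ) : g a + g' a * (b - a) ≤ g b := by
  have hφ (t : ℝ) : HasDerivAt (g - fun s => g' a * s) (g' t - g' a) t := by
    simpa using (hg t).sub ((hasDerivAt_id t).const_mul (g' a))
  have hφ' (t : ℝ) : HasDerivAt (fun s => g' s - g' a) (g'' t) t := (hg' t).sub_const _
  have hconvex : ConvexOn ℝ univ (g - fun s => g' a * s) :=
    convexOn_of_hasDerivWithinAt2_nonneg convex_univ
      (continuous_iff_continuousAt.2 fun t => (hφ t).continuousAt).continuousOn
      (fun t _ => (hφ t).hasDerivWithinAt) (fun t _ => (hφ' t).hasDerivWithinAt)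
      (fun t _ => hg'' t)
  have hright : derivWithin (g - fun s => g' a * s) (Ioi a) a = 0 := by
    rw [((hφ a).hasDerivWithinAt).derivWithin (uniqueDiffWithinAt_Ioi a), sub_self]
  have hmin := hconvex.isMinOn_of_rightDeriv_eq_zero (by simp) hright (mem_univ b)
  simp only [mem_ofPred_eq, Pi.sub_apply] at hmin
  linarith

theorem abs_sub_sub_mul_le_of_abs_deriv2_le {f f' f'' : ℝ → ℝ}
    (hf : ∀ t, HasDerivAt f (f' t) t) (hf' : ∀ t, HasDerivAt f' (f'' t) t)
    {M : ℝ} (hM : ∀ t, |f'' t| ≤ M) (a b : ℝ) :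
    |f b - f a - (b - a) * f' a| ≤ M / 2 * (b - a) ^ 2 := by
  have hsq (t : ℝ) : HasDerivAt (fun t => M / 2 * t ^ 2) (M * t) t :=
    ((hasDerivAt_pow 2 t).const_mul (M / 2)).congr_deriv (by push_cast; ring)
  have hlin (t : ℝ) : HasDerivAt (fun t => M * t) M t := by
    simpa using (hasDerivAt_id t).const_mul M
  have lower := add_mul_sub_le_of_hasDerivAt2_nonneg (fun t => (hf t).add (hsq t))
    (fun t => (hf' t).add (hlin t)) (fun t => by linarith [neg_abs_le (f'' t), hM t]) a b
  have upper := add_mul_sub_le_of_hasDerivAt2_nonneg (fun t => (hsq t).sub (hf t))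
    (fun t => (hlin t).sub (hf' t)) (fun t => by linarith [le_abs_self (f'' t), hM t]) a b
  simp only [Pi.add_apply, Pi.sub_apply] at lower upper
  rw [abs_le]
  constructor <;> nlinarith

theorem integrable_of_abs_le_of_integrable_id_mul {g : ℝ → ℝ} (hg : AEStronglyMeasurable g)
    {C : ℝ} (hC : ∀ y, |g y| ≤ C) (hyg : Integrable fun y => y * g y) : Integrable g := by
  have hbound : Integrable fun y => |y * g y| + (Icc (-1 : ℝ) 1).indicator (fun _ => C) y :=
    hyg.abs.add ((integrable_indicator_iff measurableSet_Icc).2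
      (integrableOn_const measure_Icc_lt_top.ne))
  refine hbound.mono' hg (ae_of_all _ fun y => ?_)
  rw [Real.norm_eq_abs]
  by_cases hy : y ∈ Icc (-1 : ℝ) 1
  · rw [indicator_of_mem hy]
    linarith [abs_nonneg (y * g y), hC y]
  · rw [indicator_of_notMem hy, abs_mul]
    have hy1 : 1 < |y| := not_le.1 fun h => hy (abs_le.1 h)
    nlinarith [abs_nonneg (g y)]

theorem abs_integral_comp_sub_mul_sub_le {f f' f'' g : ℝ → ℝ}
    (hf : ∀ t, HasDerivAt f (f' t) t) (hf' : ∀ t, HasDerivAt f' (f'' t) t)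
    {M : ℝ} (hM : ∀ t, |f'' t| ≤ M) (hg : Integrable g) (hyg : Integrable fun y => y * g y)
    (hy2g : Integrable fun y => y ^ 2 * |g y|) (x h : ℝ) :
    |(∫ y, f (x - h * y) * g y) - ((f x * ∫ y, g y) - h * f' x * ∫ y, y * g y)|
      ≤ M / 2 * h ^ 2 * ∫ y, y ^ 2 * |g y| := by
  set R : ℝ → ℝ := fun y => f (x - h * y) - f x + h * y * f' x
  have hR (y : ℝ) : |R y * g y| ≤ M / 2 * h ^ 2 * (y ^ 2 * |g y|) := by
    have hRy : |R y| ≤ M / 2 * (x - h * y - x) ^ 2 := by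
      convert abs_sub_sub_mul_le_of_abs_deriv2_le hf hf' hM x (x - h * y) using 2; ring
    rw [abs_mul]
    calc |R y| * |g y| ≤ M / 2 * (x - h * y - x) ^ 2 * |g y| := by gcongr
      _ = M / 2 * h ^ 2 * (y ^ 2 * |g y|) := by ring
  have hf_cont : Continuous f := continuous_iff_continuousAt.2 fun t => (hf t).continuousAt
  have hRg : Integrable fun y => R y * g y :=
    (hy2g.const_mul _).mono' (by fun_prop) (ae_of_all _ hR)
  have hsplit : (∫ y, f (x - h * y) * g y)
      = (f x * ∫ y, g y) - h * f' x * (∫ y, y * g y) + ∫ y, R y * g y := by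
    calc (∫ y, f (x - h * y) * g y)
        = ∫ y, f x * g y - h * f' x * (y * g y) + R y * g y := by
          congr 1 with y; simp only [R]; ring
      _ = _ := by
          rw [integral_add (f := fun y => f x * g y - h * f' x * (y * g y))
              ((hg.const_mul _).sub (hyg.const_mul _)) hRg,
            integral_sub (hg.const_mul _) (hyg.const_mul _), integral_const_mul,
            integral_const_mul]
  rw [hsplit, add_sub_cancel_left]
  calc |∫ y, R y * g y| ≤ ∫ y, M / 2 * h ^ 2 * (y ^ 2 * |g y|) :=
        norm_integral_le_of_norm_le (f := fun y => R y * g y) (hy2g.const_mul _) (ae_of_all _ hR)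
    _ = M / 2 * h ^ 2 * ∫ y, y ^ 2 * |g y| := integral_const_mul _ _

open MeasureTheory ProbabilityTheory Filter Real Finset
open scoped ENNReal NNReal Topology
theorem stmt_13_general
    (f f' f'' K K' : ℝ → ℝ)
    (hf : ∀ t, HasDerivAt f (f' t) t) (hf' : ∀ t, HasDerivAt f' (f'' t) t)
    (hf''bdd : ∃ C, ∀ t, |f'' t| ≤ C)
    (hKderiv : ∀ t, HasDerivAt K (K' t) t)
    (hK'bdd : ∃ C, ∀ t, |K' t| ≤ C)
    (hK'int : ∫ y, K' y = 0)
    (hK'mom1 : ∫ y, y * K' y = -1)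
    (hK'mom2 : Integrable (fun y => y ^ 2 * |K' y|))
    (Mf τ2 : ℝ) (hMf : Mf = ⨆ t, |f'' t|)
    (hτ2 : τ2 = (1 / 2) * ∫ y, y ^ 2 * |K' y|) :
    ∀ h : ℝ, 0 < h → ∀ x : ℝ,
      |(1 / h) * (∫ y, f (x - h * y) * K' y) - f' x| ≤ Mf * τ2 * h := by
  intro h hh x
  have hMf_bound (t : ℝ) : |f'' t| ≤ Mf := by
    obtain ⟨C, hC⟩ := hf''bdd
    exact hMf ▸ le_ciSup ⟨C, forall_mem_range.2 hC⟩ t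
  have hK'meas : AEStronglyMeasurable K' := by
    rw [funext fun t => (hKderiv t).deriv.symm]
    exact (measurable_deriv K).aestronglyMeasurable
  have hyK' : Integrable fun y => y * K' y := Integrable.of_integral_ne_zero (by simp [hK'mom1])
  obtain ⟨C, hC⟩ := hK'bdd
  have hbound := abs_integral_comp_sub_mul_sub_le hf hf' hMf_bound
    (integrable_of_abs_le_of_integrable_id_mul hK'meas hC hyK') hyK' hK'mom2 x h
  rw [hK'int, hK'mom1, mul_zero, zero_sub, mul_neg_one, neg_neg] at hbound
  calc |(1 / h) * (∫ y, f (x - h * y) * K' y) - f' x|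
      = |(1 / h) * ((∫ y, f (x - h * y) * K' y) - h * f' x)| := by
        congr 1; field_simp
    _ = (1 / h) * |(∫ y, f (x - h * y) * K' y) - h * f' x| := by
        rw [abs_mul, abs_of_pos (one_div_pos.2 hh)]
    _ ≤ (1 / h) * (Mf / 2 * h ^ 2 * ∫ y, y ^ 2 * |K' y|) := by gcongr
    _ = Mf * τ2 * h := by rw [hτ2]; field_simp

theorem stmt_13
    (f f' f'' K K' : ℝ → ℝ)
    (hf : ∀ t, HasDerivAt f (f' t) t) (hf' : ∀ t, HasDerivAt f' (f'' t) t)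
    (hfbdd : ∃ C, ∀ t, |f t| ≤ C)
    (hf''bdd : ∃ C, ∀ t, |f'' t| ≤ C)
    (hKderiv : ∀ t, HasDerivAt K (K' t) t)
    (hK'bdd : ∃ C, ∀ t, |K' t| ≤ C)
    (hK'int : ∫ y, K' y = 0)
    (hK'mom1 : ∫ y, y * K' y = -1)
    (hK'mom2 : Integrable (fun y => y ^ 2 * |K' y|))
    (Mf τ2 : ℝ) (hMf : Mf = ⨆ t, |f'' t|)
    (hτ2 : τ2 = (1 / 2) * ∫ y, y ^ 2 * |K' y|) :
    ∀ h : ℝ, 0 < h → ∀ x : ℝ,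
      |(1 / h) * (∫ y, f (x - h * y) * K' y) - f' x| ≤ Mf * τ2 * h :=
  stmt_13_general f f' f'' K K' hf hf' hf''bdd hKderiv hK'bdd hK'int hK'mom1 hK'mom2 Mf τ2 hMf hτ2
end

section
/- Negligibility of the bias remainder: with c_k(x) = (f(X_k)/g(X_k))·(1/h_k²)K′((x−X_k)/h_k), C_n(x) = ∑_{k=1}^n c_k(x), and Ř_n(x) = E[C_n(x)] − n f′(x), under assumptions (A1)–(A2) and with (X_k) i.i.d. with density g, if α > 1/5 then sup_{x∈ℝ}|Ř_n(x)| = o(n^{(1+3α)/2}) as n → ∞. -/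
open MeasureTheory ProbabilityTheory Filter Real Finset
open scoped ENNReal NNReal Topology

/-!
Because `X_k` has density `g`, the factor `f / g` cancels it:
`E c_k(x) = h_k⁻² ∫ f(t) K'((x - t) / h_k) dt = h_k⁻¹ ∫ f(x - h_k u) K'(u) du`.
Expanding `f` to second order around `x` and using `∫ K' = 0`, `∫ u K'(u) du = -1`, this differs
from `f'(x)` by at most `‖f''‖_∞ (∫ u² |K'(u)| du) h_k`, uniformly in `x`. Summing over `k ≤ n`
gives `|Ř_n(x)| ≤ C ∑_{k ≤ n} k^{-α} ≤ C' n^{1-α}`, and `1 - α < (1 + 3α) / 2` exactly when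
`α > 1/5`.
-/

section KernelBias

variable {f f' f'' : ℝ → ℝ} {M : ℝ}

theorem abs_sub_sub_mul_le_mul_sq (hf : ∀ t, HasDerivAt f (f' t) t)
    (hf' : ∀ t, HasDerivAt f' (f'' t) t) (hM : ∀ t, |f'' t| ≤ M) (x y : ℝ) :
    |f y - f x - f' x * (y - x)| ≤ M * (y - x) ^ 2 := by
  have hM0 : 0 ≤ M := (abs_nonneg _).trans (hM 0)
  have hlip (t : ℝ) : |f' t - f' x| ≤ M * |t - x| :=
    Convex.norm_image_sub_le_of_norm_hasDerivWithin_le (fun s _ => (hf' s).hasDerivWithinAt)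
      (fun s _ => hM s) convex_univ (Set.mem_univ x) (Set.mem_univ t)
  have hφ (t : ℝ) : HasDerivAt (fun s => f s - f' x * s) (f' t - f' x) t := by
    simpa using (hf t).fun_sub ((hasDerivAt_id t).const_mul (f' x))
  have key := Convex.norm_image_sub_le_of_norm_hasDerivWithin_le
    (fun t _ => (hφ t).hasDerivWithinAt)
    (fun t ht => (hlip t).trans (mul_le_mul_of_nonneg_left (Set.abs_sub_left_of_mem_uIcc ht) hM0))
    (convex_uIcc x y) Set.left_mem_uIcc Set.right_mem_uIcc
  calc |f y - f x - f' x * (y - x)| = |(f y - f' x * y) - (f x - f' x * x)| := by ring_nf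
    _ ≤ M * |y - x| * |y - x| := key
    _ = M * (y - x) ^ 2 := by rw [mul_assoc, abs_mul_abs_self, sq]

variable (hf : ∀ t, HasDerivAt f (f' t) t) (hf' : ∀ t, HasDerivAt f' (f'' t) t)
  (hM : ∀ t, |f'' t| ≤ M)
include hf hf' hM

theorem abs_taylor_remainder_comp_sub_mul_le (x h u : ℝ) :
    |f (x - h * u) - f x + f' x * (h * u)| ≤ M * h ^ 2 * u ^ 2 := by
  have := abs_sub_sub_mul_le_mul_sq hf hf' hM x (x - h * u)
  ring_nf at this ⊢
  linarith

theorem integrable_taylor_remainder_comp_sub_mul_mul {w : ℝ → ℝ}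
    (hw : AEStronglyMeasurable w) (hw2 : Integrable fun u => u ^ 2 * |w u|) (x h : ℝ) :
    Integrable fun u => (f (x - h * u) - f x + f' x * (h * u)) * w u := by
  have hfc : Continuous f := continuous_iff_continuousAt.2 fun t => (hf t).continuousAt
  refine (hw2.const_mul (M * h ^ 2)).mono' ((by fun_prop : Continuous fun u =>
    f (x - h * u) - f x + f' x * (h * u)).aestronglyMeasurable.mul hw) (ae_of_all _ fun u => ?_)
  rw [norm_mul, Real.norm_eq_abs, Real.norm_eq_abs]
  exact (mul_le_mul_of_nonneg_right (abs_taylor_remainder_comp_sub_mul_le hf hf' hM x h u)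
    (abs_nonneg _)).trans_eq (by ring)

theorem abs_integral_taylor_remainder_comp_sub_mul_mul_le {w : ℝ → ℝ}
    (hw : AEStronglyMeasurable w) (hw2 : Integrable fun u => u ^ 2 * |w u|) (x h : ℝ) :
    |∫ u, (f (x - h * u) - f x + f' x * (h * u)) * w u| ≤
      M * h ^ 2 * ∫ u, u ^ 2 * |w u| := by
  rw [← integral_const_mul]
  refine (abs_integral_le_integral_abs).trans (integral_mono
    (integrable_taylor_remainder_comp_sub_mul_mul hf hf' hM hw hw2 x h).abs
    (hw2.const_mul _) fun u => ?_)
  rw [abs_mul]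
  exact (mul_le_mul_of_nonneg_right (abs_taylor_remainder_comp_sub_mul_le hf hf' hM x h u)
    (abs_nonneg _)).trans_eq (by ring)

variable {K' : ℝ → ℝ} (hK' : Integrable K') (hK'1 : Integrable fun u => u * K' u)
  (hK'2 : Integrable fun u => u ^ 2 * |K' u|)
include hK' hK'1 hK'2

theorem integrable_comp_sub_mul_mul (x h : ℝ) : Integrable fun u => f (x - h * u) * K' u := by
  have hR :=
    integrable_taylor_remainder_comp_sub_mul_mul hf hf' hM hK'.aestronglyMeasurable hK'2 x h
  have hA : Integrable fun u => f x * K' u - f' x * h * (u * K' u) :=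
    (hK'.const_mul _).sub (hK'1.const_mul _)
  exact (hA.add hR).congr (ae_of_all _ fun u => by simp only [Pi.add_apply]; ring)

theorem integral_comp_sub_mul_mul (hK'0 : ∫ u, K' u = 0) (hK'm1 : ∫ u, u * K' u = -1)
    (x h : ℝ) :
    ∫ u, f (x - h * u) * K' u =
      f' x * h + ∫ u, (f (x - h * u) - f x + f' x * (h * u)) * K' u := by
  have hR :=
    integrable_taylor_remainder_comp_sub_mul_mul hf hf' hM hK'.aestronglyMeasurable hK'2 x h
  have hdecomp : (fun u => f (x - h * u) * K' u) = fun u =>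
      (f x * K' u - f' x * h * (u * K' u)) + (f (x - h * u) - f x + f' x * (h * u)) * K' u := by
    ext u; ring
  have hA : Integrable fun u => f x * K' u - f' x * h * (u * K' u) :=
    (hK'.const_mul _).sub (hK'1.const_mul _)
  rw [hdecomp, integral_add hA hR,
    integral_sub (hK'.const_mul _) (hK'1.const_mul _), integral_const_mul, integral_const_mul,
    hK'0, hK'm1]
  ring

theorem abs_inv_mul_integral_comp_sub_mul_mul_sub_le (hK'0 : ∫ u, K' u = 0)
    (hK'm1 : ∫ u, u * K' u = -1) {h : ℝ} (hh : 0 < h) (x : ℝ) :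
    |h⁻¹ * (∫ u, f (x - h * u) * K' u) - f' x| ≤ M * (∫ u, u ^ 2 * |K' u|) * h := by
  have hR := abs_integral_taylor_remainder_comp_sub_mul_mul_le hf hf' hM
    hK'.aestronglyMeasurable hK'2 x h
  rw [integral_comp_sub_mul_mul hf hf' hM hK' hK'1 hK'2 hK'0 hK'm1]
  set I := ∫ u, (f (x - h * u) - f x + f' x * (h * u)) * K' u
  rw [show h⁻¹ * (f' x * h + I) - f' x = h⁻¹ * I by field_simp; ring, abs_mul, abs_inv,
    abs_of_pos hh, inv_mul_le_iff₀ hh]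
  exact hR.trans_eq (by ring)

end KernelBias

theorem integral_comp_sub_div {E : Type*} [NormedAddCommGroup E] [NormedSpace ℝ E]
    (G : ℝ → E) (x h : ℝ) : ∫ t, G ((x - t) / h) = |h| • ∫ u, G u := by
  rw [integral_sub_left_eq_self (fun t => G (t / h)) volume x, Measure.integral_comp_div]

theorem MeasureTheory.Integrable.comp_sub_div {E : Type*} [NormedAddCommGroup E] {G : ℝ → E}
    (hG : Integrable G) (x : ℝ) {h : ℝ} (hh : h ≠ 0) : Integrable fun t => G ((x - t) / h) :=
  (hG.comp_div hh).comp_sub_left x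

section Density

variable {Ω : Type*} [MeasurableSpace Ω] {P : Measure Ω} {Y : Ω → ℝ} {g φ : ℝ → ℝ}

theorem integrable_comp_iff_of_map_eq_withDensity (hY : AEMeasurable Y P)
    (hlaw : P.map Y = volume.withDensity fun t => ENNReal.ofReal (g t)) (hg : Measurable g)
    (hg0 : ∀ t, 0 ≤ g t) (hφ : Measurable φ) :
    Integrable (fun ω => φ (Y ω)) P ↔ Integrable fun t => g t * φ t := by
  rw [← Function.comp_def, ← integrable_map_measure hφ.aestronglyMeasurable hY, hlaw,
    integrable_withDensity_iff_integrable_smul' hg.ennreal_ofReal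
      (ae_of_all _ fun _ => ENNReal.ofReal_lt_top)]
  simp only [ENNReal.toReal_ofReal (hg0 _), smul_eq_mul]

theorem integral_comp_eq_of_map_eq_withDensity (hY : AEMeasurable Y P)
    (hlaw : P.map Y = volume.withDensity fun t => ENNReal.ofReal (g t)) (hg : Measurable g)
    (hg0 : ∀ t, 0 ≤ g t) (hφ : Measurable φ) :
    ∫ ω, φ (Y ω) ∂P = ∫ t, g t * φ t := by
  rw [← integral_map hY hφ.aestronglyMeasurable, hlaw,
    integral_withDensity_eq_integral_toReal_smul hg.ennreal_ofReal
      (ae_of_all _ fun _ => ENNReal.ofReal_lt_top)]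
  simp only [ENNReal.toReal_ofReal (hg0 _), smul_eq_mul]

end Density

theorem integrable_pow_mul_of_abs_le {w : ℝ → ℝ} {C : ℝ} (hw : AEStronglyMeasurable w)
    (hC : ∀ t, |w t| ≤ C) {m n : ℕ} (hmn : m ≤ n) (hn : Integrable fun t => t ^ n * w t) :
    Integrable fun t => t ^ m * w t := by
  have hind : Integrable ((Set.Icc (-1 : ℝ) 1).indicator fun _ => C) :=
    (integrableOn_const (by simp)).integrable_indicator measurableSet_Icc
  refine (hind.add hn.norm).mono' ((continuous_pow m).aestronglyMeasurable.mul hw)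
    (ae_of_all _ fun t => ?_)
  rw [Pi.add_apply, norm_mul, norm_mul, norm_pow, norm_pow, Real.norm_eq_abs, Real.norm_eq_abs]
  by_cases ht : |t| ≤ 1
  · rw [Set.indicator_of_mem (show t ∈ Set.Icc (-1 : ℝ) 1 from abs_le.1 ht)]
    have := mul_le_mul (pow_le_one₀ (n := m) (abs_nonneg t) ht) (hC t) (abs_nonneg _) zero_le_one
    nlinarith [abs_nonneg (w t), pow_nonneg (abs_nonneg t) n]
  · have ht1 : 1 ≤ |t| := (not_le.1 ht).le
    rw [Set.indicator_of_notMem fun hmem : t ∈ Set.Icc (-1 : ℝ) 1 => ht (abs_le.2 hmem)]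
    simpa using mul_le_mul_of_nonneg_right (pow_le_pow_right₀ ht1 hmn) (abs_nonneg (w t))

theorem sum_Icc_rpow_neg_le {α : ℝ} (hα0 : 0 ≤ α) (hα1 : α < 1) (n : ℕ) :
    ∑ k ∈ Icc 1 n, (k : ℝ) ^ (-α) ≤ (1 - α)⁻¹ * (n : ℝ) ^ (1 - α) := by
  have h1α : 0 < 1 - α := by linarith
  rcases Nat.eq_zero_or_pos n with rfl | hn
  · simp [zero_rpow h1α.ne']
  have hanti : AntitoneOn (fun t : ℝ => t ^ (-α)) (Set.Icc (1 : ℕ) n) := fun a ha b _ hab =>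
    rpow_le_rpow_of_nonpos (one_pos.trans_le (by simpa using ha.1)) hab (by linarith)
  have hsum : ∑ k ∈ Icc 1 n, (k : ℝ) ^ (-α) = 1 + ∑ i ∈ Ico 1 n, ((i + 1 : ℕ) : ℝ) ^ (-α) := by
    rw [show ∑ k ∈ Icc 1 n, (k : ℝ) ^ (-α) = ∑ i ∈ range n, ((i + 1 : ℕ) : ℝ) ^ (-α) by
      rw [range_eq_Ico, sum_Ico_add' (fun k : ℕ => (k : ℝ) ^ (-α))]; rfl,
      range_eq_Ico, sum_eq_sum_Ico_succ_bot hn]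
    simp
  have hint : ∫ t in (1 : ℕ)..(n : ℝ), t ^ (-α) = ((n : ℝ) ^ (1 - α) - 1) / (1 - α) := by
    rw [integral_rpow (Or.inl (by linarith)), Nat.cast_one, one_rpow, neg_add_eq_sub]
  have hle := hanti.sum_le_integral_Ico hn
  rw [hint] at hle
  rw [div_eq_inv_mul, mul_sub, mul_one] at hle
  rw [hsum]
  linarith [one_le_inv₀ h1α |>.2 (by linarith)]

theorem eventually_mul_rpow_le_mul_rpow {a b : ℝ} (hab : a < b) (A : ℝ) {δ : ℝ} (hδ : 0 < δ) :
    ∀ᶠ n : ℕ in atTop, A * (n : ℝ) ^ a ≤ δ * (n : ℝ) ^ b := by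
  have htend : Tendsto (fun n : ℕ => (n : ℝ) ^ (b - a)) atTop atTop :=
    (tendsto_rpow_atTop (sub_pos.2 hab)).comp tendsto_natCast_atTop_atTop
  filter_upwards [htend.eventually_ge_atTop (A / δ), eventually_gt_atTop 0] with n hn hn0
  have hpos : (0 : ℝ) < n := by exact_mod_cast hn0
  calc A * (n : ℝ) ^ a = δ * (A / δ) * (n : ℝ) ^ a := by field_simp
    _ ≤ δ * (n : ℝ) ^ (b - a) * (n : ℝ) ^ a := by gcongr
    _ = δ * (n : ℝ) ^ b := by rw [mul_assoc, ← rpow_add hpos, sub_add_cancel]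

theorem abs_integral_sum_sub_le {Ω : Type*} [MeasurableSpace Ω] {P : Measure Ω} {ι : Type*}
    (s : Finset ι) {c : ι → Ω → ℝ} {a : ℝ} {b : ι → ℝ}
    (hc : ∀ k ∈ s, Integrable (c k) P) (hb : ∀ k ∈ s, |(∫ ω, c k ω ∂P) - a| ≤ b k) :
    |(∫ ω, ∑ k ∈ s, c k ω ∂P) - #s * a| ≤ ∑ k ∈ s, b k := by
  rw [integral_finsetSum s hc, ← nsmul_eq_mul, ← sum_const, ← sum_sub_distrib]
  exact (abs_sum_le_sum_abs _ _).trans (sum_le_sum hb)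

theorem integrable_and_integral_div_density_mul_kernel {Ω : Type*} [MeasurableSpace Ω]
    {P : Measure Ω} {Y : Ω → ℝ} {f g K' : ℝ → ℝ} (hY : AEMeasurable Y P)
    (hlaw : P.map Y = volume.withDensity fun t => ENNReal.ofReal (g t)) (hg : Continuous g)
    (hgpos : ∀ t, 0 < g t) (hf : Continuous f) (hK'm : Measurable K') {h : ℝ} (hh : 0 < h)
    (x : ℝ) (hG : Integrable fun u => f (x - h * u) * K' u) :
    Integrable (fun ω => f (Y ω) / g (Y ω) * ((1 / h ^ 2) * K' ((x - Y ω) / h))) P ∧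
      ∫ ω, f (Y ω) / g (Y ω) * ((1 / h ^ 2) * K' ((x - Y ω) / h)) ∂P =
        h⁻¹ * ∫ u, f (x - h * u) * K' u := by
  have hφ : Measurable fun t => f t / g t * ((1 / h ^ 2) * K' ((x - t) / h)) := by fun_prop
  have hgφ : (fun t => g t * (f t / g t * ((1 / h ^ 2) * K' ((x - t) / h)))) =
      fun t => (h ^ 2)⁻¹ * (fun u => f (x - h * u) * K' u) ((x - t) / h) := by
    ext t
    dsimp only
    rw [mul_div_cancel₀ _ hh.ne', sub_sub_cancel]
    field_simp [(hgpos t).ne']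
  have hg0 t : 0 ≤ g t := (hgpos t).le
  refine ⟨?_, ?_⟩
  · rw [integrable_comp_iff_of_map_eq_withDensity hY hlaw hg.measurable hg0 hφ, hgφ]
    exact (hG.comp_sub_div x hh.ne').const_mul _
  · rw [integral_comp_eq_of_map_eq_withDensity hY hlaw hg.measurable hg0 hφ, hgφ,
      integral_const_mul, integral_comp_sub_div (fun u => f (x - h * u) * K' u), abs_of_pos hh,
      smul_eq_mul]
    field_simp

theorem abs_integral_div_density_mul_kernel_sub_le {Ω : Type*} [MeasurableSpace Ω]
    {P : Measure Ω} {Y : Ω → ℝ} {f f' f'' g K' : ℝ → ℝ} {M : ℝ} (hY : AEMeasurable Y P)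
    (hlaw : P.map Y = volume.withDensity fun t => ENNReal.ofReal (g t)) (hg : Continuous g)
    (hgpos : ∀ t, 0 < g t) (hf : ∀ t, HasDerivAt f (f' t) t)
    (hf' : ∀ t, HasDerivAt f' (f'' t) t) (hM : ∀ t, |f'' t| ≤ M) (hK'm : Measurable K')
    (hK' : Integrable K') (hK'1 : Integrable fun u => u * K' u)
    (hK'2 : Integrable fun u => u ^ 2 * |K' u|) (hK'0 : ∫ u, K' u = 0)
    (hK'm1 : ∫ u, u * K' u = -1) {h : ℝ} (hh : 0 < h) (x : ℝ) :
    Integrable (fun ω => f (Y ω) / g (Y ω) * ((1 / h ^ 2) * K' ((x - Y ω) / h))) P ∧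
      |(∫ ω, f (Y ω) / g (Y ω) * ((1 / h ^ 2) * K' ((x - Y ω) / h)) ∂P) - f' x| ≤
        M * (∫ u, u ^ 2 * |K' u|) * h := by
  obtain ⟨hint, heq⟩ := integrable_and_integral_div_density_mul_kernel hY hlaw hg hgpos
    (continuous_iff_continuousAt.2 fun t => (hf t).continuousAt) hK'm hh x
    (integrable_comp_sub_mul_mul hf hf' hM hK' hK'1 hK'2 x h)
  rw [heq]
  exact ⟨hint, abs_inv_mul_integral_comp_sub_mul_mul_sub_le hf hf' hM hK' hK'1 hK'2 hK'0 hK'm1 hh x⟩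

theorem stmt_15_general
    {Ω : Type*} [MeasureSpace Ω]
    (α : ℝ) (hα0 : 0 < α) (hα1 : α < 1)
    (hαlo : 1/5 < α)
    (h : ℕ → ℝ) (hband : ∀ n : ℕ, h n = (n : ℝ) ^ (-α))
    (X : ℕ → Ω → ℝ) (g : ℝ → ℝ)
    (hXmeas : ∀ n, Measurable (X n))
    (hgpos : ∀ t, 0 < g t)
    (hXlaw : ∀ n, Measure.map (X n) ℙ
      = volume.withDensity (fun t => ENNReal.ofReal (g t)))
    (f : ℝ → ℝ)
    (K K' : ℝ → ℝ)
    (hKderiv : ∀ t, HasDerivAt K (K' t) t)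
    (hK'bdd : ∃ C, ∀ t, |K' t| ≤ C)
    (hK'int : ∫ t, K' t = 0)
    (hK'mom1 : ∫ t, t * K' t = -1)
    (hK'mom4 : Integrable (fun t => t ^ 4 * |K' t|))
    (f' f'' : ℝ → ℝ)
    (hf : ∀ t, HasDerivAt f (f' t) t) (hf' : ∀ t, HasDerivAt f' (f'' t) t)
    (hf''bdd : ∃ C, ∀ t, |f'' t| ≤ C)
    (g' : ℝ → ℝ)
    (hg : ∀ t, HasDerivAt g (g' t) t)
    (c : ℕ → ℝ → Ω → ℝ)
    (hc : ∀ n x ω, c n x ω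
      = (f (X n ω) / g (X n ω)) * ((1 / h n ^ 2) * K' ((x - X n ω) / h n)))
    (C : ℕ → ℝ → Ω → ℝ)
    (hC : ∀ n x ω, C n x ω = ∑ k ∈ Finset.Icc 1 n, c k x ω)
    :
    ∀ δ : ℝ, 0 < δ → ∃ N : ℕ, ∀ n : ℕ, N ≤ n → ∀ x : ℝ,
      |(∫ ω, C n x ω ∂ℙ) - (n : ℝ) * f' x| ≤ δ * (n : ℝ) ^ ((1 + 3 * α) / 2) := by
  intro δ hδ
  obtain ⟨Mf, hMf⟩ := hf''bdd
  obtain ⟨CK', hCK'⟩ := hK'bdd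
  have hK'meas : Measurable K' := by
    rw [show K' = deriv K from funext fun t => (hKderiv t).deriv.symm]
    exact measurable_deriv K
  have hK'1 : Integrable fun t => t * K' t := by
    -- a non-integrable function has Bochner integral `0`, not `-1`
    by_contra hK'1
    norm_num [integral_undef hK'1] at hK'mom1
  have hK' : Integrable K' := by
    simpa using integrable_pow_mul_of_abs_le hK'meas.aestronglyMeasurable hCK' (Nat.zero_le 1)
      (by simpa using hK'1)
  have hK'2 : Integrable fun t => t ^ 2 * |K' t| :=
    integrable_pow_mul_of_abs_le hK'meas.abs.aestronglyMeasurable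
      (fun t => (abs_abs (K' t)).trans_le (hCK' t)) (by norm_num) hK'mom4
  have hgc : Continuous g := continuous_iff_continuousAt.2 fun t => (hg t).continuousAt
  have hterm (k : ℕ) (hk : 1 ≤ k) (x : ℝ) : Integrable (c k x) ∧
      |(∫ ω, c k x ω) - f' x| ≤ Mf * (∫ t, t ^ 2 * |K' t|) * (k : ℝ) ^ (-α) := by
    rw [← hband k, show c k x = _ from funext (hc k x)]
    exact abs_integral_div_density_mul_kernel_sub_le (hXmeas k).aemeasurable (hXlaw k) hgc hgpos
      hf hf' hMf hK'meas hK' hK'1 hK'2 hK'int hK'mom1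
      (hband k ▸ rpow_pos_of_pos (by exact_mod_cast hk) _) x
  have hA : 0 ≤ Mf * ∫ t, t ^ 2 * |K' t| :=
    mul_nonneg ((abs_nonneg _).trans (hMf 0)) (integral_nonneg fun t => by positivity)
  have hbias (n : ℕ) (x : ℝ) : |(∫ ω, C n x ω) - n * f' x| ≤
      (Mf * ∫ t, t ^ 2 * |K' t|) * ((1 - α)⁻¹ * (n : ℝ) ^ (1 - α)) := by
    have hsum := abs_integral_sum_sub_le (Icc 1 n) (fun k hk => (hterm k (mem_Icc.1 hk).1 x).1)
      (fun k hk => (hterm k (mem_Icc.1 hk).1 x).2)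
    rw [Nat.card_Icc, add_tsub_cancel_right, ← mul_sum] at hsum
    rw [show C n x = fun ω => ∑ k ∈ Icc 1 n, c k x ω from funext (hC n x)]
    exact hsum.trans (mul_le_mul_of_nonneg_left (sum_Icc_rpow_neg_le hα0.le hα1 n) hA)
  obtain ⟨N, hN⟩ := eventually_atTop.1 (eventually_mul_rpow_le_mul_rpow
    (a := 1 - α) (b := (1 + 3 * α) / 2) (by linarith) _ hδ)
  exact ⟨N, fun n hn x => (hbias n x).trans ((mul_assoc _ _ _).symm.trans_le (hN n hn))⟩

theorem stmt_15
    {Ω : Type*} [MeasureSpace Ω] [IsProbabilityMeasure (ℙ : Measure Ω)]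
    (α : ℝ) (hα0 : 0 < α) (hα1 : α < 1)
    (hαlo : 1/5 < α)
    (h : ℕ → ℝ) (hband : ∀ n : ℕ, h n = (n : ℝ) ^ (-α))
    (X : ℕ → Ω → ℝ) (g : ℝ → ℝ)
    (hXmeas : ∀ n, Measurable (X n))
    (hXindep : iIndepFun X ℙ)
    (hgpos : ∀ t, 0 < g t)
    (hXlaw : ∀ n, Measure.map (X n) ℙ
      = volume.withDensity (fun t => ENNReal.ofReal (g t)))
    (f : ℝ → ℝ)
    (K K' : ℝ → ℝ)
    (hKpos : ∀ t, 0 ≤ K t)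
    (hKsymm : ∀ t, K (-t) = K t)
    (hKbdd : ∃ C, ∀ t, K t ≤ C)
    (hKderiv : ∀ t, HasDerivAt K (K' t) t)
    (hK'bdd : ∃ C, ∀ t, |K' t| ≤ C)
    (hKint : ∫ t, K t = 1)
    (hK'int : ∫ t, K' t = 0)
    (hK'mom1 : ∫ t, t * K' t = -1)
    (hK'mom2 : ∫ t, t ^ 2 * K' t = 0)
    (hKmom4 : Integrable (fun t => t ^ 4 * K t))
    (hK'mom4 : Integrable (fun t => t ^ 4 * |K' t|))
    (f' f'' : ℝ → ℝ)
    (hf : ∀ t, HasDerivAt f (f' t) t) (hf' : ∀ t, HasDerivAt f' (f'' t) t)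
    (hfbdd : ∃ C, ∀ t, |f t| ≤ C) (hf'bdd : ∃ C, ∀ t, |f' t| ≤ C)
    (hf''bdd : ∃ C, ∀ t, |f'' t| ≤ C)
    (g' g'' : ℝ → ℝ)
    (hg : ∀ t, HasDerivAt g (g' t) t) (hg' : ∀ t, HasDerivAt g' (g'' t) t)
    (hgbdd : ∃ C, ∀ t, |g t| ≤ C) (hg'bdd : ∃ C, ∀ t, |g' t| ≤ C)
    (hg''bdd : ∃ C, ∀ t, |g'' t| ≤ C)
    (c : ℕ → ℝ → Ω → ℝ)
    (hc : ∀ n x ω, c n x ω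
      = (f (X n ω) / g (X n ω)) * ((1 / h n ^ 2) * K' ((x - X n ω) / h n)))
    (C : ℕ → ℝ → Ω → ℝ)
    (hC : ∀ n x ω, C n x ω = ∑ k ∈ Finset.Icc 1 n, c k x ω)
    :
    ∀ δ : ℝ, 0 < δ → ∃ N : ℕ, ∀ n : ℕ, N ≤ n → ∀ x : ℝ,
      |(∫ ω, C n x ω ∂ℙ) - (n : ℝ) * f' x| ≤ δ * (n : ℝ) ^ ((1 + 3 * α) / 2) :=
  stmt_15_general α hα0 hα1 hαlo h hband X g hXmeas hgpos hXlaw f K K' hKderiv hK'bdd hK'int hK'mom1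
    hK'mom4 f' f'' hf hf' hf''bdd g' hg c hc C hC
end
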